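/- arXiv:1208.3638 — 8 statements merged into one kernel-verified Lean document; each statement's English description precedes it below -/
import Mathlib

section
/- Let n > t+1 and let F ⊆ S_n be a t-cycle-intersecting family. For any i ≠ j ∈ [n], if the ij-fixing ◁_{ij}(F) is the stabilizer of t points, then F is also the stabilizer of t points. -/
open Equiv Finset
open scoped Classical

noncomputable section

/-- A common cycle of two permutations `σ` and `π`: a nonempty subset `B` invariant
under both, on which they agree, and on which `σ` acts as a single cycle. -/
def IsCommonCycle {n : ℕ} (σ π : Equiv.Perm (Fin n)) (B : Finset (Fin n)) : Prop :=
  B.Nonempty ∧ (∀ x ∈ B, σ x ∈ B) ∧ (∀ x ∈ B, π x ∈ B) ∧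
  (∀ x ∈ B, σ x = π x) ∧ (∀ x ∈ B, ∀ y ∈ B, σ.SameCycle x y)

/-- A family of permutations is `t`-cycle-intersecting if any two of its members
have at least `t` common cycles on pairwise disjoint subsets. -/
def TCycleIntersecting {n : ℕ} (t : ℕ) (F : Set (Equiv.Perm (Fin n))) : Prop :=
  ∀ σ ∈ F, ∀ π ∈ F, ∃ 𝒞 : Finset (Finset (Fin n)),
    t ≤ 𝒞.card ∧ (∀ B ∈ 𝒞, IsCommonCycle σ π B) ∧
    (𝒞 : Set (Finset (Fin n))).Pairwise fun A B => Disjoint A B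

/-- The `ij`-fixing of a permutation: if `σ i = j` then make `i` a fixed point and
send `σ⁻¹ i` to `j`, leaving everything else unchanged. -/
def ijFix {n : ℕ} (i j : Fin n) (σ : Equiv.Perm (Fin n)) : Equiv.Perm (Fin n) :=
  if σ i = j then σ * Equiv.swap i (σ⁻¹ i) else σ

/-- The `ij`-fixing operation on a family of permutations. -/
def fixFamOp {n : ℕ} (i j : Fin n) (A : Set (Equiv.Perm (Fin n))) :
    Set (Equiv.Perm (Fin n)) :=
  (fun σ => if ijFix i j σ ∈ A then σ else ijFix i j σ) '' A

/-- A family is fixed if it is closed under all `ij`-fixing operations. -/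
def IsFixedFam {n : ℕ} (A : Set (Equiv.Perm (Fin n))) : Prop :=
  ∀ i j : Fin n, i ≠ j → fixFamOp i j A = A

/-- The `(i,j)`-compression of a permutation: if `σ i ≠ i` and `σ j = j`, then
fix `i`, send `j` to `σ i` and `σ⁻¹ i` to `j`; otherwise leave `σ` unchanged. -/
def compPerm {n : ℕ} (i j : Fin n) (σ : Equiv.Perm (Fin n)) : Equiv.Perm (Fin n) :=
  if σ i ≠ i ∧ σ j = j then (Equiv.swap i (σ i) * Equiv.swap i j) * σ else σ

/-- The `(i,j)`-compression operation on a family of permutations. -/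
def compFam {n : ℕ} (i j : Fin n) (A : Set (Equiv.Perm (Fin n))) :
    Set (Equiv.Perm (Fin n)) :=
  (fun σ => if compPerm i j σ ∈ A then σ else compPerm i j σ) '' A

/-- A family is compressed if it is closed under all `(i,j)`-compressions. -/
def IsCompressedFam {n : ℕ} (A : Set (Equiv.Perm (Fin n))) : Prop :=
  ∀ i j : Fin n, i < j → compFam i j A = A

/-- `F` is the stabilizer of `t` points: there are `t` distinct points such that `F`
consists exactly of the permutations fixing all of them. -/
def IsTPointStabilizer {n : ℕ} (t : ℕ) (F : Set (Equiv.Perm (Fin n))) : Prop :=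
  ∃ a : Fin t ↪ Fin n, F = {σ | ∀ k, σ (a k) = a k}

/-- The set of fixed points of a permutation. -/
def fixSet {n : ℕ} (σ : Equiv.Perm (Fin n)) : Finset (Fin n) :=
  Finset.univ.filter fun x => σ x = x

/-- The up-permutation of a set `B`: all permutations fixing every element of `B`. -/
def UpSet {n : ℕ} (B : Finset (Fin n)) : Set (Equiv.Perm (Fin n)) :=
  {σ | ∀ x ∈ B, σ x = x}

/-- The up-permutation of a collection of sets. -/
def UpFam {n : ℕ} (g : Set (Finset (Fin n))) : Set (Equiv.Perm (Fin n)) :=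
  ⋃ B ∈ g, UpSet B

/-- `g` is a generating set for `F`: it contains no set of size `n-1` and
`Up(g) = F`. -/
def IsGenSet {n : ℕ} (g : Set (Finset (Fin n))) (F : Set (Equiv.Perm (Fin n))) : Prop :=
  (∀ B ∈ g, B.card ≠ n - 1) ∧ UpFam g = F

/-- `s⁺(B)`: the largest element of `B`, in the 1-based numbering of `[n] = {1,…,n}`
(so `s⁺(∅) = 0`). -/
def sPlus {n : ℕ} (B : Finset (Fin n)) : ℕ := B.sup fun x => (x : ℕ) + 1

/-- `s⁺(g) = max {s⁺(B) : B ∈ g}`. -/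
def sPlusFam {n : ℕ} (g : Set (Finset (Fin n))) : ℕ := sSup (sPlus '' g)

/-- `s_min(G(F)) = min {s⁺(g) : g a generating set of F}`. -/
def sMin {n : ℕ} (F : Set (Equiv.Perm (Fin n))) : ℕ :=
  sInf (sPlusFam '' {g | IsGenSet g F})

/-- `L(B)`: all sets obtained from `B` by left-shifting, i.e. sets of the same size
whose `i`-th smallest element is at most the `i`-th smallest element of `B`. -/
def LSet {n : ℕ} (B : Finset (Fin n)) : Set (Finset (Fin n)) :=
  {A | ∃ h : A.card = B.card, ∀ i : Fin B.card,
      A.orderEmbOfFin h i ≤ B.orderEmbOfFin rfl i}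

/-- `L(g) = ⋃_{B ∈ g} L(B)`. -/
def LFam {n : ℕ} (g : Set (Finset (Fin n))) : Set (Finset (Fin n)) :=
  ⋃ B ∈ g, LSet B

/-- `L_*(g)`: the minimal (under inclusion) elements of `L(g)`. -/
def Lstar {n : ℕ} (g : Set (Finset (Fin n))) : Set (Finset (Fin n)) :=
  {A | A ∈ LFam g ∧ ∀ A' ∈ LFam g, A' ⊆ A → A' = A}

/-- The interval `[m] = {1,…,m}` inside `Fin n` (1-based). -/
def Ival (n m : ℕ) : Finset (Fin n) := Finset.univ.filter fun x => (x : ℕ) < m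

/-- `D(E) = {σ : fix(σ) ∩ [s⁺(E)] = E}`. -/
def DSet {n : ℕ} (E : Finset (Fin n)) : Set (Equiv.Perm (Fin n)) :=
  {σ | fixSet σ ∩ Ival n (sPlus E) = E}

/-!
The fixing map is injective on `F`, so `F` and the stabilizer `UpSet A = fixFamOp i j F` have the
same size and it suffices to show `F ⊆ UpSet A`. A member of `F` outside `fixFamOp i j F` has the
form `σ = swap i j * π` with `π ∈ UpSet A` and `π i = i`; it fixes `A` pointwise unless `i` or `j`
lies in `A`. In those cases we exhibit `τ ∈ F` all of whose common cycles with `σ` meet the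
`(t-1)`-set `A \ {i}` (resp. `A \ {j}`), contradicting `t`-cycle-intersection. Such `τ` come from
the stabilizer: for `g ∈ UpSet A` either `g ∈ F` or `swap i j * g ∈ F`, and `g = 1` or `g` a full
cycle on `Aᶜ` (which has at least two points as `n > t + 1`) does the job.
-/

namespace Equiv.Perm

variable {α : Type*} [DecidableEq α] [Fintype α]

lemma exists_isCycle_support_eq (S : Finset α) (hS : 2 ≤ S.card) :
    ∃ c : Perm α, c.IsCycle ∧ c.support = S := by
  have hlen : 2 ≤ S.toList.length := by rwa [Finset.length_toList]
  refine ⟨S.toList.formPerm, List.isCycle_formPerm S.nodup_toList hlen, ?_⟩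
  rw [List.support_formPerm_of_nodup _ S.nodup_toList, toList_toFinset]
  rintro x hx
  simp [hx] at hlen

lemma IsCycle.support_subset_of_mapsTo {c : Perm α} (hc : c.IsCycle) {B : Finset α}
    (hB : B.Nonempty) (hBc : B ⊆ c.support) (hcB : ∀ x ∈ B, c x ∈ B) : c.support ⊆ B := by
  obtain ⟨x, hx⟩ := hB
  intro y hy
  obtain ⟨k, -, rfl⟩ :=
    (hc.sameCycle (mem_support.1 (hBc hx)) (mem_support.1 hy)).exists_pow_eq'
  exact Set.MapsTo.perm_pow (s := (B : Set α)) hcB k hx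

/-- `swap i j * c` is `c` with its fixed point `i` spliced in just before `j`. -/
lemma IsCycle.support_subset_of_swap_mul_mapsTo {c : Perm α} (hc : c.IsCycle) {i j : α}
    (hci : c i = i) {B : Finset α} (hB : B.Nonempty) (hBc : ∀ x ∈ B, x ∉ c.support → x = i)
    (hj : j ∈ B → j ∈ c.support) (hcB : ∀ x ∈ B, (swap i j * c) x ∈ B) :
    c.support ⊆ B := by
  have hi : i ∉ c.support := notMem_support.2 hci
  have hjB : i ∈ B → j ∈ B := fun hiB => by simpa [hci] using hcB i hiB
  refine (hc.support_subset_of_mapsTo ?_ inter_subset_right ?_).trans inter_subset_left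
  · obtain ⟨x, hx⟩ := hB
    by_cases hxc : x ∈ c.support
    · exact ⟨x, mem_inter.2 ⟨hx, hxc⟩⟩
    · have hjB' := hjB (hBc x hx hxc ▸ hx)
      exact ⟨j, mem_inter.2 ⟨hjB', hj hjB'⟩⟩
  · intro x hx
    obtain ⟨hxB, hxc⟩ := mem_inter.1 hx
    refine mem_inter.2 ⟨?_, apply_mem_support.2 hxc⟩
    have hcx := hcB x hxB
    have hcxi : c x ≠ i := ne_of_mem_of_not_mem (apply_mem_support.2 hxc) hi
    by_cases hcxj : c x = j
    · rw [mul_apply, hcxj, swap_apply_right] at hcx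
      exact hcxj ▸ hjB hcx
    · rwa [mul_apply, swap_apply_of_ne_of_ne hcxi hcxj] at hcx

end Equiv.Perm

open Equiv.Perm

section

variable {n t : ℕ} {F : Set (Perm (Fin n))} {A : Finset (Fin n)} {i j : Fin n}
  {σ π : Perm (Fin n)}

lemma isTPointStabilizer_iff :
    IsTPointStabilizer t F ↔ ∃ A : Finset (Fin n), A.card = t ∧ F = UpSet A := by
  constructor
  · rintro ⟨a, rfl⟩
    refine ⟨univ.map a, by simp, ?_⟩
    ext σ
    simp [UpSet]
  · rintro ⟨A, hA, rfl⟩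
    refine ⟨(A.orderEmbOfFin hA).toEmbedding, ?_⟩
    ext σ
    refine ⟨fun h k => h _ (by simp), fun h x hx => ?_⟩
    obtain ⟨k, rfl⟩ : x ∈ Set.range (A.orderEmbOfFin hA) := by rwa [A.range_orderEmbOfFin hA]
    exact h k

lemma mem_upSet_of_support_eq_compl (h : σ.support = Aᶜ) : σ ∈ UpSet A :=
  fun _ hx => notMem_support.1 fun hσx => mem_compl.1 (h ▸ hσx) hx

lemma TCycleIntersecting.exists_isCommonCycle_disjoint (hF : TCycleIntersecting t F)
    (hσ : σ ∈ F) (hπ : π ∈ F) {T : Finset (Fin n)} (hT : T.card < t) :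
    ∃ B, IsCommonCycle σ π B ∧ Disjoint B T := by
  obtain ⟨𝒞, hcard, hcyc, hdisj⟩ := hF σ hσ π hπ
  by_contra! h
  have hmeet : ∀ B ∈ 𝒞, (B ∩ T).Nonempty := fun B hB =>
    not_disjoint_iff_nonempty_inter.1 (h B (hcyc B hB))
  have hpair : (𝒞 : Set (Finset (Fin n))).PairwiseDisjoint (· ∩ T) :=
    fun B hB C hC hBC => (hdisj hB hC hBC).mono inter_subset_left inter_subset_left
  have := (card_le_card_biUnion hpair hmeet).trans
    (card_le_card (biUnion_subset.2 fun B _ => inter_subset_right))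
  omega

lemma eq_of_mem_of_disjoint_erase {B : Finset (Fin n)} {x : Fin n} (h : Disjoint B (A.erase i))
    (hxB : x ∈ B) (hxA : x ∈ A) : x = i :=
  by_contra fun hxi => disjoint_left.1 h hxB (mem_erase.2 ⟨hxi, hxA⟩)

lemma ijFix_of_apply_eq (h : σ i = j) : ijFix i j σ = swap i j * σ := by
  rw [ijFix, if_pos h, mul_swap_eq_swap_mul, h, coe_inv, apply_symm_apply, swap_comm]

lemma ijFix_of_apply_ne (h : σ i ≠ j) : ijFix i j σ = σ := if_neg h

lemma apply_eq_of_ijFix_notMem (hσ : σ ∈ F) (h : ijFix i j σ ∉ F) : σ i = j := by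
  by_contra hne
  exact h (by rwa [ijFix_of_apply_ne hne])

lemma injOn_fixFamOp :
    Set.InjOn (fun σ => if ijFix i j σ ∈ F then σ else ijFix i j σ) F := by
  intro σ hσ τ hτ h
  dsimp only at h
  split_ifs at h with hσF hτF hτF
  · exact h
  · exact absurd (h ▸ hσ) hτF
  · exact absurd (h ▸ hτ) hσF
  · rwa [ijFix_of_apply_eq (apply_eq_of_ijFix_notMem hσ hσF),
      ijFix_of_apply_eq (apply_eq_of_ijFix_notMem hτ hτF), mul_right_inj] at h

lemma ncard_fixFamOp (i j : Fin n) (F : Set (Perm (Fin n))) :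
    (fixFamOp i j F).ncard = F.ncard :=
  injOn_fixFamOp.ncard_image

lemma mem_or_swap_mul_mem_of_mem_fixFamOp {g : Perm (Fin n)} (hg : g ∈ fixFamOp i j F) :
    g ∈ F ∨ (g i = i ∧ swap i j * g ∈ F) := by
  obtain ⟨τ, hτ, rfl⟩ := hg
  beta_reduce
  split_ifs with h
  · exact Or.inl hτ
  · have hτi := apply_eq_of_ijFix_notMem hτ h
    rw [ijFix_of_apply_eq hτi, mul_apply, hτi, swap_apply_right, ← mul_assoc, swap_mul_self,
      one_mul]
    exact Or.inr ⟨rfl, hτ⟩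

lemma mem_fixFamOp_or_exists_swap_mul (hσ : σ ∈ F) :
    σ ∈ fixFamOp i j F ∨ ∃ π ∈ fixFamOp i j F, π i = i ∧ swap i j * π = σ := by
  have hmem : (if ijFix i j σ ∈ F then σ else ijFix i j σ) ∈ fixFamOp i j F :=
    Set.mem_image_of_mem _ hσ
  split_ifs at hmem with h
  · exact Or.inl hmem
  · have hσi := apply_eq_of_ijFix_notMem hσ h
    rw [ijFix_of_apply_eq hσi] at hmem
    refine Or.inr ⟨_, hmem, by rw [mul_apply, hσi, swap_apply_right], ?_⟩
    rw [← mul_assoc, swap_mul_self, one_mul]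

lemma exists_notMem_fixed_of_swap_mul_mem (hF : TCycleIntersecting A.card F) (hij : i ≠ j)
    (hFA : fixFamOp i j F = UpSet A) (hπ : π ∈ UpSet A) (hσ : swap i j * π ∈ F)
    (hiA : i ∈ A) : ∃ x ∉ A, π x = x := by
  by_contra! hder
  have hπi : π i = i := hπ i hiA
  have hσi : (swap i j * π) i = j := by rw [mul_apply, hπi, swap_apply_left]
  have h1 : (1 : Perm (Fin n)) ∈ fixFamOp i j F := hFA ▸ fun _ _ => rfl
  rcases mem_or_swap_mul_mem_of_mem_fixFamOp h1 with h1F | ⟨-, hsF⟩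
  · obtain ⟨B, ⟨⟨x, hx⟩, -, -, hagree, -⟩, hBT⟩ :=
      hF.exists_isCommonCycle_disjoint hσ h1F (card_erase_lt_of_mem hiA)
    have hfix : π x = swap i j x := swap_apply_eq_iff.1 (hagree x hx)
    by_cases hxA : x ∈ A
    · obtain rfl := eq_of_mem_of_disjoint_erase hBT hx hxA
      rw [hπi, swap_apply_left] at hfix
      exact hij hfix
    · by_cases hxj : x = j
      · rw [hxj, swap_apply_right, ← hπi] at hfix
        exact hij (π.injective hfix).symm
      · rw [swap_apply_of_ne_of_ne (ne_of_mem_of_not_mem hiA hxA).symm hxj] at hfix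
        exact hder x hxA hfix
  · rw [mul_one] at hsF
    obtain ⟨B, ⟨⟨x, hx⟩, hσB, -, hagree, -⟩, hBT⟩ :=
      hF.exists_isCommonCycle_disjoint hσ hsF (card_erase_lt_of_mem hiA)
    -- `swap i j * π` and `swap i j` agree exactly at the fixed points of `π`
    have hBi : ∀ y ∈ B, y = i := fun y hy => by
      by_contra hyi
      exact hder y (fun hyA => hyi (eq_of_mem_of_disjoint_erase hBT hy hyA))
        ((swap i j).injective (hagree y hy))
    have hjB := hσB i (hBi x hx ▸ hx)
    rw [hσi] at hjB
    exact hij (hBi j hjB).symm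

lemma left_notMem_of_swap_mul_mem (hF : TCycleIntersecting A.card F) (hA : 2 ≤ Aᶜ.card)
    (hij : i ≠ j) (hFA : fixFamOp i j F = UpSet A) (hπ : π ∈ UpSet A)
    (hσ : swap i j * π ∈ F) : i ∉ A := by
  intro hiA
  obtain ⟨x₀, hx₀A, hx₀⟩ := exists_notMem_fixed_of_swap_mul_mem hF hij hFA hπ hσ hiA
  obtain ⟨c, hc, hcA⟩ := exists_isCycle_support_eq Aᶜ hA
  have hcU := mem_upSet_of_support_eq_compl hcA
  have hci : c i = i := hcU i hiA
  have hx₀c : x₀ ∈ c.support := hcA ▸ mem_compl.2 hx₀A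
  rcases mem_or_swap_mul_mem_of_mem_fixFamOp (hFA ▸ hcU) with hcF | ⟨-, hcF⟩
  · obtain ⟨B, ⟨hne, -, hcB, hagree, -⟩, hBT⟩ :=
      hF.exists_isCommonCycle_disjoint hσ hcF (card_erase_lt_of_mem hiA)
    have hiB : i ∉ B := fun hiB => by
      have h := hagree i hiB
      rw [mul_apply, hπ i hiA, swap_apply_left, hci] at h
      exact hij h.symm
    have hBc : B ⊆ c.support := fun x hx =>
      hcA ▸ mem_compl.2 fun hxA => hiB (eq_of_mem_of_disjoint_erase hBT hx hxA ▸ hx)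
    have h := hagree x₀ (hc.support_subset_of_mapsTo hne hBc hcB hx₀c)
    rw [mul_apply, hx₀] at h
    by_cases hx₀j : x₀ = j
    · have hcx₀ := apply_mem_support.2 hx₀c
      rw [← h, hx₀j, swap_apply_right, hcA] at hcx₀
      exact mem_compl.1 hcx₀ hiA
    · rw [swap_apply_of_ne_of_ne (ne_of_mem_of_not_mem hiA hx₀A).symm hx₀j] at h
      exact mem_support.1 hx₀c h.symm
  · obtain ⟨B, ⟨hne, -, hcB, hagree, -⟩, hBT⟩ :=
      hF.exists_isCommonCycle_disjoint hσ hcF (card_erase_lt_of_mem hiA)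
    have hBc : ∀ x ∈ B, x ∉ c.support → x = i := fun x hx hxc =>
      eq_of_mem_of_disjoint_erase hBT hx (by rwa [hcA, mem_compl, not_not] at hxc)
    have hjc : j ∈ B → j ∈ c.support := fun hjB =>
      hcA ▸ mem_compl.2 fun hjA => hij (eq_of_mem_of_disjoint_erase hBT hjB hjA).symm
    have hsub := hc.support_subset_of_swap_mul_mapsTo hci hne hBc hjc hcB
    have h : π x₀ = c x₀ := (swap i j).injective (hagree x₀ (hsub hx₀c))
    exact mem_support.1 hx₀c (h ▸ hx₀)

lemma right_notMem_of_swap_mul_mem (hF : TCycleIntersecting A.card F) (hA : 2 ≤ Aᶜ.card)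
    (hij : i ≠ j) (hFA : fixFamOp i j F = UpSet A) (hπ : π ∈ UpSet A) (hπi : π i = i)
    (hσ : swap i j * π ∈ F) (hiA : i ∉ A) : j ∉ A := by
  intro hjA
  obtain ⟨c, hc, hcA⟩ := exists_isCycle_support_eq Aᶜ hA
  have hcU := mem_upSet_of_support_eq_compl hcA
  have hic : i ∈ c.support := hcA ▸ mem_compl.2 hiA
  have hcF : c ∈ F := by
    rcases mem_or_swap_mul_mem_of_mem_fixFamOp (hFA ▸ hcU) with hcF | ⟨hci, -⟩
    · exact hcF
    · exact absurd hci (mem_support.1 hic)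
  obtain ⟨B, ⟨hne, hσB, hcB, hagree, -⟩, hBT⟩ :=
    hF.exists_isCommonCycle_disjoint hσ hcF (card_erase_lt_of_mem hjA)
  have hjB : j ∉ B := fun hjB => by
    have h := hagree j hjB
    rw [mul_apply, hπ j hjA, swap_apply_right, hcU j hjA] at h
    exact hij h
  have hBc : B ⊆ c.support := fun x hx =>
    hcA ▸ mem_compl.2 fun hxA => hjB (eq_of_mem_of_disjoint_erase hBT hx hxA ▸ hx)
  have hjB' := hσB i (hc.support_subset_of_mapsTo hne hBc hcB hic)
  rw [mul_apply, hπi, swap_apply_left] at hjB'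
  exact hjB hjB'

lemma swap_mul_mem_upSet (hF : TCycleIntersecting A.card F) (hA : 2 ≤ Aᶜ.card)
    (hij : i ≠ j) (hFA : fixFamOp i j F = UpSet A) (hπ : π ∈ UpSet A) (hπi : π i = i)
    (hσ : swap i j * π ∈ F) : swap i j * π ∈ UpSet A := by
  have hiA := left_notMem_of_swap_mul_mem hF hA hij hFA hπ hσ
  have hjA := right_notMem_of_swap_mul_mem hF hA hij hFA hπ hπi hσ hiA
  intro x hx
  rw [mul_apply, hπ x hx,
    swap_apply_of_ne_of_ne (ne_of_mem_of_not_mem hx hiA) (ne_of_mem_of_not_mem hx hjA)]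

end

/-- If `n > t+1`, `F` is `t`-cycle-intersecting and the `ij`-fixing of `F` is the
stabilizer of `t` points, then so is `F`. -/
theorem stmt1 {n t : ℕ} (hn : t + 1 < n) (F : Set (Equiv.Perm (Fin n)))
    (hF : TCycleIntersecting t F) (i j : Fin n) (hij : i ≠ j)
    (h : IsTPointStabilizer t (fixFamOp i j F)) :
    IsTPointStabilizer t F := by
  obtain ⟨A, rfl, hFA⟩ := isTPointStabilizer_iff.1 h
  have hA : 2 ≤ Aᶜ.card := by
    rw [card_compl, Fintype.card_fin]
    omega
  have hsub : F ⊆ UpSet A := by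
    intro σ hσ
    rcases mem_fixFamOp_or_exists_swap_mul (i := i) (j := j) hσ with hσF | ⟨π, hπ, hπi, rfl⟩
    · exact hFA ▸ hσF
    · exact swap_mul_mem_upSet hF hA hij hFA (hFA ▸ hπ) hπi hσ
  have hcard : (UpSet A).ncard ≤ F.ncard := by rw [← hFA, ncard_fixFamOp]
  exact isTPointStabilizer_iff.2 ⟨A, rfl, Set.eq_of_subset_of_ncard_le hsub hcard (Set.toFinite _)⟩
end
end

section
/- Suppose F ⊆ S_n is a t-cycle-intersecting family that is fixed. Then fix(F) = {fix(σ) : σ ∈ F} is a t-intersecting family of subsets of [n]. -/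
open Equiv Finset
open scoped Classical

noncomputable section

/-!
Given `σ, π ∈ F`, let `T` be the union of the `π`-cycles on which `σ` has no fixed point.
Repeated `ij`-fixings turn `π` into a member `ρ` of `F` that fixes `T` pointwise and agrees
with `π` elsewhere. Every common cycle `C` of `σ` and `ρ` consists of common fixed points of
`σ` and `π`. Indeed, if `σ` moved a point of `C` it would move all of `C`, so `C` would miss
`T`; then `σ = ρ = π` on `C`, so `C` would be a union of `π`-cycles free of fixed points of
`σ`, i.e. `C ⊆ T`. Hence `σ` fixes `C`, so `C` misses `T` and `π = ρ = σ` fixes `C` too.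
The `t` disjoint common cycles of `σ` and `ρ` thus give `t` common fixed points of `σ`, `π`.
-/

namespace Equiv.Perm

variable {α : Type*} {σ π : Perm α} {s : Set α} {x y : α}

theorem mem_of_sameCycle_of_mapsTo [Finite α] (hs : Set.MapsTo π s s) (hxy : π.SameCycle x y)
    (hx : x ∈ s) : y ∈ s := by
  obtain ⟨k, -, rfl⟩ := hxy.exists_pow_eq'
  rw [coe_pow]
  exact hs.iterate k hx

theorem mem_of_apply_mem_of_mapsTo [Finite α] (hs : Set.MapsTo σ s s) (hx : σ x ∈ s) : x ∈ s :=
  mem_of_sameCycle_of_mapsTo hs (sameCycle_apply_left.mpr (SameCycle.refl σ x)) hx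

variable [DecidableEq α] {i : α}

theorem mapsTo_swap_mul (hs : Set.MapsTo σ s s) (hi : i ∈ s) :
    Set.MapsTo (swap i (σ i) * σ) s s := by
  intro x hx
  rw [mul_apply, swap_apply_def]
  split_ifs
  exacts [hs hi, hi, hs hx]

theorem swap_mul_apply_of_notMem [Finite α] (hs : Set.MapsTo σ s s) (hi : i ∈ s) (hx : x ∉ s) :
    (swap i (σ i) * σ) x = σ x := by
  have hxi : σ x ≠ i := fun h => hx (mem_of_apply_mem_of_mapsTo hs (h ▸ hi))
  have hxσi : σ x ≠ σ i := σ.injective.ne fun h => hx (h ▸ hi)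
  exact swap_apply_of_ne_of_ne hxi hxσi

variable [Fintype α]

def cyclesMovedBy (π σ : Perm α) : Finset α :=
  {x | ∀ y, π.SameCycle x y → σ y ≠ y}

theorem mem_cyclesMovedBy : x ∈ cyclesMovedBy π σ ↔ ∀ y, π.SameCycle x y → σ y ≠ y := by
  simp [cyclesMovedBy]

theorem apply_ne_of_mem_cyclesMovedBy (hx : x ∈ cyclesMovedBy π σ) : σ x ≠ x :=
  mem_cyclesMovedBy.mp hx x (SameCycle.refl π x)

theorem mapsTo_cyclesMovedBy : Set.MapsTo π (cyclesMovedBy π σ) (cyclesMovedBy π σ) :=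
  fun x hx => mem_cyclesMovedBy.mpr fun y hy =>
    mem_cyclesMovedBy.mp hx y (sameCycle_apply_right.mpr (SameCycle.refl π x) |>.trans hy)

end Equiv.Perm

open Equiv.Perm

variable {n : ℕ} {F : Set (Perm (Fin n))} {σ π ρ : Perm (Fin n)}

theorem ijFix_apply_self (i : Fin n) (σ : Perm (Fin n)) :
    ijFix i (σ i) σ = swap i (σ i) * σ := by
  rw [ijFix, if_pos rfl, mul_swap_eq_swap_mul, swap_comm]
  simp

theorem IsFixedFam.ijFix_mem (hfix : IsFixedFam F) {i j : Fin n} (hij : i ≠ j) (hσ : σ ∈ F) :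
    ijFix i j σ ∈ F := by
  by_contra h
  have hmem : ijFix i j σ ∈ fixFamOp i j F := ⟨σ, hσ, if_neg h⟩
  exact h (hfix i j hij ▸ hmem)

theorem IsFixedFam.swap_mul_mem (hfix : IsFixedFam F) {i : Fin n} (hi : σ i ≠ i) (hσ : σ ∈ F) :
    swap i (σ i) * σ ∈ F :=
  ijFix_apply_self i σ ▸ hfix.ijFix_mem hi.symm hσ

theorem IsFixedFam.exists_mem_fixing (hfix : IsFixedFam F) (B : Finset (Fin n)) (hσ : σ ∈ F)
    (hB : Set.MapsTo σ B B) : ∃ ρ ∈ F, (∀ x ∈ B, ρ x = x) ∧ ∀ x ∉ B, ρ x = σ x := by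
  induction hk : #(B ∩ σ.support) using Nat.strong_induction_on generalizing σ with
  | _ k ih =>
  by_cases hmoved : ∃ i ∈ B, σ i ≠ i
  · obtain ⟨i, hiB, hi⟩ := hmoved
    have hsupp : B ∩ (swap i (σ i) * σ).support ⊂ B ∩ σ.support := by
      refine ssubset_of_subset_of_ssubset (s₂ := (B ∩ σ.support).erase i) ?_
        (erase_ssubset (mem_inter.mpr ⟨hiB, mem_support.mpr hi⟩))
      intro x hx
      obtain ⟨hxB, hx⟩ := mem_inter.mp hx
      obtain ⟨hxσ, hxi⟩ := mem_support_swap_mul_imp_mem_support_ne hx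
      exact mem_erase.mpr ⟨hxi, mem_inter.mpr ⟨hxB, hxσ⟩⟩
    obtain ⟨ρ, hρF, hρB, hρout⟩ := ih _ (hk ▸ card_lt_card hsupp) (hfix.swap_mul_mem hi hσ)
      (mapsTo_swap_mul hB hiB) rfl
    exact ⟨ρ, hρF, hρB, fun x hx => (hρout x hx).trans (swap_mul_apply_of_notMem hB hiB hx)⟩
  · push Not at hmoved
    exact ⟨σ, hσ, hmoved, fun _ _ => rfl⟩

theorem IsCommonCycle.apply_eq_self (hρin : ∀ x ∈ cyclesMovedBy π σ, ρ x = x)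
    (hρout : ∀ x ∉ cyclesMovedBy π σ, ρ x = π x) {C : Finset (Fin n)}
    (hC : IsCommonCycle σ ρ C) {x : Fin n} (hx : x ∈ C) : σ x = x ∧ π x = x := by
  obtain ⟨-, hσC, -, hagree, hcyc⟩ := hC
  have hσfix : ∀ x ∈ C, σ x = x := by
    by_contra! ⟨x, hxC, hx⟩
    have hmoved : ∀ y ∈ C, σ y ≠ y := fun y hy => ((hcyc x hxC y hy).apply_eq_self_iff).not.mp hx
    have hnotT : ∀ y ∈ C, y ∉ cyclesMovedBy π σ := fun y hy hyT =>
      hmoved y hy ((hagree y hy).trans (hρin y hyT))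
    have hπσ : ∀ y ∈ C, π y = σ y := fun y hy =>
      (hρout y (hnotT y hy)).symm.trans (hagree y hy).symm
    have hπC : Set.MapsTo π C C := fun y hy => hπσ y hy ▸ hσC y hy
    obtain ⟨z, hxz, hz⟩ : ∃ z, π.SameCycle x z ∧ σ z = z := by
      simpa [mem_cyclesMovedBy] using hnotT x hxC
    exact hmoved z (mem_of_sameCycle_of_mapsTo hπC hxz hxC) hz
  have hxT : x ∉ cyclesMovedBy π σ := fun h => apply_ne_of_mem_cyclesMovedBy h (hσfix x hx)
  exact ⟨hσfix x hx, (hρout x hxT).symm.trans ((hagree x hx).symm.trans (hσfix x hx))⟩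

/-- If `F` is a fixed `t`-cycle-intersecting family, then the collection of fixed-point
sets of members of `F` is a `t`-intersecting family of subsets of `[n]`. -/
theorem stmt2 {n t : ℕ} (F : Set (Equiv.Perm (Fin n)))
    (hF : TCycleIntersecting t F) (hfix : IsFixedFam F) :
    ∀ A ∈ fixSet '' F, ∀ B ∈ fixSet '' F, t ≤ (A ∩ B).card := by
  rintro _ ⟨σ, hσ, rfl⟩ _ ⟨π, hπ, rfl⟩
  obtain ⟨ρ, hρF, hρin, hρout⟩ :=
    hfix.exists_mem_fixing (cyclesMovedBy π σ) hπ mapsTo_cyclesMovedBy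
  obtain ⟨𝒞, ht, hcyc, hdisj⟩ := hF σ hσ ρ hρF
  have hsub : 𝒞.biUnion id ⊆ fixSet σ ∩ fixSet π := biUnion_subset.mpr fun C hC x hx => by
    simpa [fixSet] using (hcyc C hC).apply_eq_self hρin hρout hx
  calc t ≤ #𝒞 := ht
    _ ≤ #(𝒞.biUnion id) := card_le_card_biUnion hdisj fun C hC => (hcyc C hC).1
    _ ≤ #(fixSet σ ∩ fixSet π) := card_le_card hsub
end
end

section
/- Let A be any collection of permutations from S_n. If A is not compressed, then A can be transformed into a compressed family by the application of a finite number of compression operations; that is, there is a finite sequence of (i,j)-compressions (for various pairs i < j) whose successive application to A yields a compressed family. -/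
open Equiv Finset
open scoped Classical

noncomputable section

/-!
Weight a permutation by the sum of its fixed points. A compression that acts on `σ` replaces
the fixed point `j` by the smaller fixed point `i`, so it lowers this weight. The compression of
a family is the image of a map that keeps or lowers the weight of each member, so the total
weight of the family drops strictly whenever the family changes; compressing as long as some
compression changes the family therefore stops, at a compressed family.
-/

theorem exists_list_foldl_isFixedPt {α ι : Type*} (P : ι → Prop) (f : ι → α → α)
    (μ : α → ℕ) (hμ : ∀ k, P k → ∀ a, f k a ≠ a → μ (f k a) < μ a) (a : α) :
    ∃ L : List ι, (∀ k ∈ L, P k) ∧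
      ∀ k, P k → Function.IsFixedPt (f k) (L.foldl (fun b k => f k b) a) := by
  induction hm : μ a using Nat.strong_induction_on generalizing a with
  | _ m ih =>
    by_cases hfix : ∀ k, P k → f k a = a
    · exact ⟨[], by simp, hfix⟩
    push Not at hfix
    obtain ⟨k, hk, hmove⟩ := hfix
    obtain ⟨L, hL, hfixL⟩ := ih _ (hm ▸ hμ k hk a hmove) (f k a) rfl
    exact ⟨k :: L, by simpa [hk] using hL, hfixL⟩

theorem Finset.sum_image_lt_sum {α M : Type*} [DecidableEq α] [AddCommMonoid M]
    [PartialOrder M] [IsOrderedCancelAddMonoid M] [CanonicallyOrderedAdd M]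
    {s : Finset α} {g : α → α} {w : α → M} (hg : ∀ x ∈ s, g x = x ∨ w (g x) < w x)
    (hne : s.image g ≠ s) :
    ∑ y ∈ s.image g, w y < ∑ x ∈ s, w x := by
  have hmoved : ∃ x ∈ s, w (g x) < w x := by
    by_contra! hnone
    refine hne ((Finset.image_congr fun x hx => ?_).trans s.image_id)
    exact (hg x hx).resolve_right (hnone x hx)
  calc ∑ y ∈ s.image g, w y ≤ ∑ x ∈ s, w (g x) :=
        Finset.sum_image_le_of_nonneg fun _ _ => zero_le
    _ < ∑ x ∈ s, w x :=
        Finset.sum_lt_sum (fun x hx => (hg x hx).elim (fun h => (congrArg w h).le)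
          le_of_lt) hmoved

section Compression

variable {n : ℕ} {i j : Fin n} {σ : Equiv.Perm (Fin n)}

theorem compPerm_of_ne_of_eq (h : σ i ≠ i ∧ σ j = j) :
    compPerm i j σ = Equiv.swap i (σ i) * Equiv.swap i j * σ := if_pos h

theorem fixSet_compPerm (hij : i ≠ j) (h : σ i ≠ i ∧ σ j = j) :
    fixSet (compPerm i j σ) = insert i ((fixSet σ).erase j) := by
  have hσij : σ i ≠ j := fun e => hij (σ.injective (e.trans h.2.symm))
  ext x
  simp only [fixSet, mem_insert, mem_erase, mem_filter, mem_univ, true_and,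
    compPerm_of_ne_of_eq h, Equiv.Perm.mul_apply]
  by_cases hxi : x = i
  · subst hxi
    simp [Equiv.swap_apply_of_ne_of_ne h.1 hσij]
  by_cases hxj : x = j
  · subst hxj
    simp [h.2, hxi, hσij]
  by_cases hxs : σ x = i
  · rw [hxs, Equiv.swap_apply_left,
      Equiv.swap_apply_of_ne_of_ne (Ne.symm hij) (Ne.symm hσij)]
    simp only [hxi, false_or]
    exact ⟨fun e => absurd e.symm hxj, fun hx => (hxi hx.2.symm).elim⟩
  · have hsj : σ x ≠ j := fun e => hxj (σ.injective (e.trans h.2.symm))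
    have hsi : σ x ≠ σ i := fun e => hxi (σ.injective e)
    rw [Equiv.swap_apply_of_ne_of_ne hxs hsj, Equiv.swap_apply_of_ne_of_ne hxs hsi]
    simp [hxi, hxj]

def permWt (σ : Equiv.Perm (Fin n)) : ℕ := ∑ x ∈ fixSet σ, (x : ℕ)

theorem permWt_compPerm_lt (hij : i < j) (h : σ i ≠ i ∧ σ j = j) :
    permWt (compPerm i j σ) < permWt σ := by
  have hi : i ∉ (fixSet σ).erase j := by simp [fixSet, h.1]
  have hj : j ∈ fixSet σ := by simp [fixSet, h.2]
  have hij' : (i : ℕ) < j := hij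
  rw [permWt, fixSet_compPerm hij.ne h, Finset.sum_insert hi, permWt,
    ← Finset.sum_erase_add _ _ hj]
  omega

theorem compPerm_eq_self_or_permWt_lt (hij : i < j) (σ : Equiv.Perm (Fin n)) :
    compPerm i j σ = σ ∨ permWt (compPerm i j σ) < permWt σ := by
  by_cases h : σ i ≠ i ∧ σ j = j
  · exact Or.inr (permWt_compPerm_lt hij h)
  · exact Or.inl (if_neg h)

def famWt (A : Set (Equiv.Perm (Fin n))) : ℕ := ∑ σ ∈ A.toFinset, permWt σ

theorem famWt_compFam_lt (hij : i < j) {A : Set (Equiv.Perm (Fin n))}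
    (hne : compFam i j A ≠ A) : famWt (compFam i j A) < famWt A := by
  set g := fun σ => if compPerm i j σ ∈ A then σ else compPerm i j σ
  have himage : (compFam i j A).toFinset = A.toFinset.image g := by
    ext τ
    rw [Set.mem_toFinset]
    simp [compFam, g]
  rw [famWt, famWt, himage]
  refine Finset.sum_image_lt_sum (fun σ _ => ?_) fun h => hne ?_
  · by_cases hσ : compPerm i j σ ∈ A
    · exact Or.inl (if_pos hσ)
    · simpa only [g, if_neg hσ] using compPerm_eq_self_or_permWt_lt hij σ
  · exact Set.toFinset_inj.mp (himage.trans h)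

end Compression

theorem stmt4_general {n : ℕ} (A : Set (Equiv.Perm (Fin n))) :
    ∃ L : List (Fin n × Fin n), (∀ p ∈ L, p.1 < p.2) ∧
      IsCompressedFam (L.foldl (fun B p => compFam p.1 p.2 B) A) := by
  obtain ⟨L, hL, hfix⟩ := exists_list_foldl_isFixedPt (fun p : Fin n × Fin n => p.1 < p.2)
    (fun p => compFam p.1 p.2) famWt (fun _ hp _ => famWt_compFam_lt hp) A
  exact ⟨L, hL, fun i j hij => hfix (i, j) hij⟩

/-- Any non-compressed family of permutations can be transformed into a compressed
family by finitely many compression operations. -/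
theorem stmt4 {n : ℕ} (A : Set (Equiv.Perm (Fin n))) (h : ¬ IsCompressedFam A) :
    ∃ L : List (Fin n × Fin n), (∀ p ∈ L, p.1 < p.2) ∧
      IsCompressedFam (L.foldl (fun B p => compFam p.1 p.2 B) A) :=
  stmt4_general A
end
end

section
/- Let F ⊆ S_n be a t-cycle-intersecting family and let n > t+1. For any i < j ∈ [n], if C_{i,j}(F) is the stabilizer of t points, then F is also the stabilizer of t points. -/
open Equiv Finset
open scoped Classical

noncomputable section

lemma compPerm_eq_self {n : ℕ} {i j : Fin n} {σ : Equiv.Perm (Fin n)}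
    (h : ¬(σ i ≠ i ∧ σ j = j)) : compPerm i j σ = σ := if_neg h

lemma compPerm_eq_conj {n : ℕ} {i j : Fin n} (hij : i ≠ j) {σ : Equiv.Perm (Fin n)}
    (h1 : σ i ≠ i) (h2 : σ j = j) :
    compPerm i j σ = Equiv.swap i j * σ * Equiv.swap i j := by
  have hσi_j : σ i ≠ j := fun h => hij (σ.injective (h.trans h2.symm))
  rw [compPerm, if_pos ⟨h1, h2⟩]
  ext y
  simp only [Perm.mul_apply]
  rcases eq_or_ne y i with rfl | hyi
  · rw [swap_apply_of_ne_of_ne h1 hσi_j, swap_apply_right, swap_apply_left, h2,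
      swap_apply_right]
  rcases eq_or_ne y j with rfl | hyj
  · rw [h2, swap_apply_right, swap_apply_left, swap_apply_of_ne_of_ne h1 hσi_j]
  · rw [swap_apply_of_ne_of_ne hyi hyj]
    rcases eq_or_ne (σ y) i with hsy | hsy
    · rw [hsy, swap_apply_left, swap_apply_of_ne_of_ne (Ne.symm hij) (Ne.symm hσi_j)]
    · have hsyj : σ y ≠ j := fun h => hyj (σ.injective (h.trans h2.symm))
      have hsyσi : σ y ≠ σ i := fun h => hyi (σ.injective h)
      rw [swap_apply_of_ne_of_ne hsy hsyj, swap_apply_of_ne_of_ne hsy hsyσi]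

lemma mem_closed {n : ℕ} {σ : Equiv.Perm (Fin n)} {B : Finset (Fin n)}
    (hinv : ∀ x ∈ B, σ x ∈ B) {x y : Fin n} (hx : x ∈ B) (h : σ.SameCycle x y) :
    y ∈ B := by
  obtain ⟨m, _, hm⟩ := h.exists_pow_eq'
  have key : ∀ m : ℕ, (σ ^ m) x ∈ B := by
    intro m
    induction m with
    | zero => simpa using hx
    | succ m ih => rw [pow_succ', Perm.mul_apply]; exact hinv _ ih
  exact hm ▸ key m

lemma common_single {n : ℕ} {ρ π : Equiv.Perm (Fin n)} {B : Finset (Fin n)} (w : Fin n)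
    (hw : ρ w ≠ π w) (hcyc : ∀ x, ρ x ≠ x → ρ.SameCycle x w)
    (hcc : IsCommonCycle ρ π B) : ∃ x, B = {x} ∧ ρ x = x ∧ π x = x := by
  obtain ⟨⟨x, hx⟩, hρinv, hπinv, hagree, hsc⟩ := hcc
  by_cases hfx : ρ x = x
  · refine ⟨x, ?_, hfx, by rw [← hagree x hx, hfx]⟩
    ext y
    simp only [Finset.mem_singleton]
    constructor
    · intro hy; exact ((hsc x hx y hy).eq_of_left hfx).symm
    · rintro rfl; exact hx
  · exact absurd (hagree w (mem_closed hρinv hx (hcyc x hfx))) hw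

lemma card_contra {n t : ℕ} (a : Fin t ↪ Fin n) (k₀ : Fin t) (𝒞 : Finset (Finset (Fin n)))
    (ht : t ≤ 𝒞.card) (hall : ∀ B ∈ 𝒞, ∃ k, k ≠ k₀ ∧ B = {a k}) : False := by
  have hsub : 𝒞 ⊆ (Finset.univ.erase k₀).image fun k => ({a k} : Finset (Fin n)) := by
    intro B hB
    obtain ⟨k, hk, rfl⟩ := hall B hB
    exact Finset.mem_image.mpr ⟨k, Finset.mem_erase.mpr ⟨hk, Finset.mem_univ k⟩, rfl⟩
  have h1 := Finset.card_le_card hsub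
  have h2 := Finset.card_image_le (s := Finset.univ.erase k₀)
    (f := fun k => ({a k} : Finset (Fin n)))
  have h3 : (Finset.univ.erase k₀).card = t - 1 := by
    rw [Finset.card_erase_of_mem (Finset.mem_univ _), Finset.card_univ, Fintype.card_fin]
  have h4 := k₀.pos
  omega

/-- If `n > t+1`, `F` is `t`-cycle-intersecting and the `(i,j)`-compression of `F`
is the stabilizer of `t` points, then so is `F`. -/
theorem stmt7 {n t : ℕ} (hn : t + 1 < n) (F : Set (Equiv.Perm (Fin n)))
    (hF : TCycleIntersecting t F) (i j : Fin n) (hij : i < j)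
    (h : IsTPointStabilizer t (compFam i j F)) :
    IsTPointStabilizer t F := by
  classical
  obtain ⟨a, hS⟩ := h
  have hijne : i ≠ j := ne_of_lt hij
  by_cases hcase : ∀ σ ∈ F, compPerm i j σ ∈ F
  · refine ⟨a, ?_⟩
    rw [← hS]
    ext σ
    constructor
    · intro hσ
      exact ⟨σ, hσ, by simp only [if_pos (hcase σ hσ)]⟩
    · rintro ⟨τ, hτ, rfl⟩
      simp only [if_pos (hcase τ hτ)]
      exact hτ
  · push_neg at hcase
    obtain ⟨σ₀, hσ₀F, hσ₀c⟩ := hcase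
    have hcond₀ : σ₀ i ≠ i ∧ σ₀ j = j := by
      by_contra hc
      exact hσ₀c (by rw [compPerm_eq_self hc]; exact hσ₀F)
    have hconj₀ : compPerm i j σ₀ = Equiv.swap i j * σ₀ * Equiv.swap i j :=
      compPerm_eq_conj hijne hcond₀.1 hcond₀.2
    have hσ₀i_j : σ₀ i ≠ j := fun hh => hijne (σ₀.injective (hh.trans hcond₀.2.symm))
    have hψS : ∀ k, compPerm i j σ₀ (a k) = a k := by
      have hmem : compPerm i j σ₀ ∈ compFam i j F :=
        ⟨σ₀, hσ₀F, by simp only [if_neg hσ₀c]⟩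
      rw [hS] at hmem
      exact hmem
    have hjT : ∀ k, a k ≠ j := by
      intro k hk
      have h1 := hψS k
      rw [hk, hconj₀, Perm.mul_apply, Perm.mul_apply, swap_apply_right,
        swap_apply_of_ne_of_ne hcond₀.1 hσ₀i_j] at h1
      exact hσ₀i_j h1
    have hmemS : ∀ {σ}, σ ∈ F → compPerm i j σ ∈ F → ∀ k, σ (a k) = a k := by
      intro σ hσ hc k
      have hmem : σ ∈ compFam i j F := ⟨σ, hσ, by simp only [if_pos hc]⟩
      rw [hS] at hmem
      exact hmem k
    have hmemC : ∀ {σ}, σ ∈ F → compPerm i j σ ∉ F →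
        ∀ k, σ (Equiv.swap i j (a k)) = Equiv.swap i j (a k) := by
      intro σ hσ hc k
      have hcond : σ i ≠ i ∧ σ j = j := by
        by_contra hcc
        exact hc (by rw [compPerm_eq_self hcc]; exact hσ)
      have hm : compPerm i j σ ∈ compFam i j F := ⟨σ, hσ, by simp only [if_neg hc]⟩
      rw [hS] at hm
      have h1 := hm k
      rw [compPerm_eq_conj hijne hcond.1 hcond.2, Perm.mul_apply, Perm.mul_apply] at h1
      have h2 := congrArg (Equiv.swap i j) h1
      rwa [swap_apply_self] at h2
    by_cases hiT : ∃ k, a k = i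
    · obtain ⟨k₀, hk₀⟩ := hiT
      have hakne : ∀ k, k ≠ k₀ → a k ≠ i := by
        intro k hk hc
        exact hk (a.injective (hc.trans hk₀.symm))
      set A : Finset (Fin n) := Finset.univ.image fun k => a k with hA
      have hiA : i ∈ A := Finset.mem_image.mpr ⟨k₀, Finset.mem_univ _, hk₀⟩
      set T' : Finset (Fin n) := insert j (A.erase i) with hT'
      set K' : Finset (Fin n) := T'ᶜ with hK'
      have hjT' : j ∈ T' := Finset.mem_insert_self _ _
      have hiK' : i ∈ K' := by
        rw [hK', Finset.mem_compl, hT', Finset.mem_insert, Finset.mem_erase]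
        push_neg
        exact ⟨hijne, fun hc => absurd rfl hc⟩
      have hjK' : j ∉ K' := by
        rw [hK', Finset.mem_compl, not_not]
        exact hjT'
      have hcardA : A.card = t := by
        rw [hA, Finset.card_image_of_injective _ a.injective, Finset.card_univ,
          Fintype.card_fin]
      have hcardT' : T'.card = t := by
        have hjA : j ∉ A.erase i := by
          simp only [Finset.mem_erase, hA, Finset.mem_image]
          rintro ⟨-, k, -, hk⟩
          exact hjT k hk
        rw [hT', Finset.card_insert_of_notMem hjA, Finset.card_erase_of_mem hiA, hcardA]
        have := k₀.pos
        omega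
      have h2K' : 2 ≤ K'.card := by
        rw [hK', Finset.card_compl, Fintype.card_fin, hcardT']
        omega
      set l : List (Fin n) := K'.toList with hl
      have hlnd : l.Nodup := Finset.nodup_toList K'
      have hllen : 2 ≤ l.length := by rw [hl, Finset.length_toList]; exact h2K'
      have hlns : ∀ x : Fin n, l ≠ [x] := by
        intro x hx
        rw [hx] at hllen
        simp at hllen
      set τ : Equiv.Perm (Fin n) := l.formPerm with hτ
      have hτfix' : ∀ x, x ∉ K' → τ x = x := fun x hx =>
        List.formPerm_apply_of_notMem (by rwa [hl, Finset.mem_toList])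
      have hτsupp : τ.support = K' := by
        rw [hτ, List.support_formPerm_of_nodup l hlnd hlns, hl, Finset.toList_toFinset]
      have hτmove : ∀ x, x ∈ K' → τ x ≠ x := by
        intro x hx
        rw [← Perm.mem_support, hτsupp]
        exact hx
      have hτi : τ i ≠ i := hτmove i hiK'
      have hτj : τ j = j := hτfix' j hjK'
      have hakT' : ∀ k, k ≠ k₀ → a k ∈ T' := by
        intro k hk
        exact Finset.mem_insert.mpr (Or.inr (Finset.mem_erase.mpr
          ⟨hakne k hk, Finset.mem_image.mpr ⟨k, Finset.mem_univ _, rfl⟩⟩))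
      have hτak : ∀ k, k ≠ k₀ → τ (a k) = a k := fun k hk =>
        hτfix' _ (by rw [hK', Finset.mem_compl, not_not]; exact hakT' k hk)
      have hcycτ : τ.IsCycle := List.isCycle_formPerm hlnd hllen
      have hτiK' : τ i ∈ K' := by
        rw [← Finset.mem_toList (s := K'), ← hl]
        exact List.formPerm_apply_mem_of_mem (by rw [hl, Finset.mem_toList]; exact hiK')
      have hτi_j : τ i ≠ j := fun hc => hjK' (hc ▸ hτiK')
      have hτfixT' : ∀ x, τ x = x → x = j ∨ ∃ k, k ≠ k₀ ∧ x = a k := by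
        intro x hx
        have hxK : x ∈ T' := by
          have h1 : x ∉ K' := fun hc => hτmove x hc hx
          rwa [hK', Finset.mem_compl, not_not] at h1
        rw [hT', Finset.mem_insert, Finset.mem_erase] at hxK
        rcases hxK with rfl | ⟨hxi, hxA⟩
        · exact Or.inl rfl
        · rw [hA, Finset.mem_image] at hxA
          obtain ⟨k, -, hk⟩ := hxA
          subst hk
          refine Or.inr ⟨k, fun hc => hxi ?_, rfl⟩
          rw [hc, hk₀]
      set ρ : Equiv.Perm (Fin n) := Equiv.swap i j * τ * Equiv.swap i j with hρ
      have hρap : ∀ x, ρ x = Equiv.swap i j (τ (Equiv.swap i j x)) := fun x => by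
        rw [hρ]; rfl
      have hρak : ∀ k, ρ (a k) = a k := by
        intro k
        by_cases hk : k = k₀
        · subst hk
          rw [hk₀, hρap, swap_apply_left, hτj, swap_apply_right]
        · rw [hρap, swap_apply_of_ne_of_ne (hakne k hk) (hjT k), hτak k hk,
            swap_apply_of_ne_of_ne (hakne k hk) (hjT k)]
      have hρj : ρ j = τ i := by
        rw [hρap, swap_apply_right, swap_apply_of_ne_of_ne hτi hτi_j]
      have hρfix : ∀ x, ρ x = x → x = i ∨ ∃ k, k ≠ k₀ ∧ x = a k := by
        intro x hx
        rw [hρap] at hx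
        have h1 : τ (Equiv.swap i j x) = Equiv.swap i j x := by
          have h2 := congrArg (Equiv.swap i j) hx
          rwa [swap_apply_self] at h2
        rcases hτfixT' _ h1 with h2 | ⟨k, hk, h2⟩
        · left
          have h3 := congrArg (Equiv.swap i j) h2
          rwa [swap_apply_self, swap_apply_right] at h3
        · right
          refine ⟨k, hk, ?_⟩
          have h3 := congrArg (Equiv.swap i j) h2
          rwa [swap_apply_self, swap_apply_of_ne_of_ne (hakne k hk) (hjT k)] at h3
      have hρcyc : ∀ x, ρ x ≠ x → ρ.SameCycle x j := by
        intro x hx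
        have h1 : τ (Equiv.swap i j x) ≠ Equiv.swap i j x := by
          intro hc
          apply hx
          rw [hρap, hc, swap_apply_self]
        have h2 : τ.SameCycle (Equiv.swap i j x) i := hcycτ.sameCycle h1 hτi
        have h3 := h2.conj (g := Equiv.swap i j)
        rwa [Equiv.swap_inv, swap_apply_self, swap_apply_left, ← hρ] at h3
      have hτcyc : ∀ x, τ x ≠ x → τ.SameCycle x i := fun x hx => hcycτ.sameCycle hx hτi
      have hρS : ρ ∈ compFam i j F := by
        rw [hS]
        exact hρak
      obtain ⟨w₀, hw₀F, hfw₀⟩ := hρS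
      have hτF : τ ∈ F := by
        by_cases hc : compPerm i j w₀ ∈ F
        · simp only [if_pos hc] at hfw₀
          exfalso
          obtain ⟨𝒞, ht, hcc, -⟩ := hF ρ (hfw₀ ▸ hw₀F) σ₀ hσ₀F
          refine card_contra a k₀ 𝒞 ht ?_
          intro B hB
          obtain ⟨x, hBx, hρx, hπx⟩ := common_single j
            (by rw [hρj, hcond₀.2]; exact hτi_j) hρcyc (hcc B hB)
          rcases hρfix x hρx with rfl | ⟨k, hk, rfl⟩
          · exact absurd hπx hcond₀.1
          · exact ⟨k, hk, hBx⟩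
        · simp only [if_neg hc] at hfw₀
          have hcondw : w₀ i ≠ i ∧ w₀ j = j := by
            by_contra hcc
            exact hc (by rw [compPerm_eq_self hcc]; exact hw₀F)
          rw [compPerm_eq_conj hijne hcondw.1 hcondw.2, hρ] at hfw₀
          have hww : w₀ = τ := mul_left_cancel (mul_right_cancel hfw₀)
          rwa [← hww]
      have hcontraτ : ∀ π ∈ F, π i = i → π j ≠ j → False := by
        intro π hπ hπi hπj
        obtain ⟨𝒞, ht, hcc, -⟩ := hF τ hτF π hπ
        refine card_contra a k₀ 𝒞 ht ?_
        intro B hB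
        obtain ⟨x, hBx, hτx, hπx⟩ := common_single i
          (by rw [hπi]; exact hτi) hτcyc (hcc B hB)
        rcases hτfixT' x hτx with rfl | ⟨k, hk, rfl⟩
        · exact absurd hπx hπj
        · exact ⟨k, hk, hBx⟩
      have hFS' : ∀ π ∈ F, ∀ k, π (Equiv.swap i j (a k)) = Equiv.swap i j (a k) := by
        intro π hπ
        by_cases hc : compPerm i j π ∈ F
        · have hπS := hmemS hπ hc
          have hπi : π i = i := by
            have h1 := hπS k₀
            rwa [hk₀] at h1
          by_cases hπj : π j = j
          · intro k
            by_cases hk : k = k₀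
            · subst hk
              rw [hk₀, swap_apply_left]
              exact hπj
            · rw [swap_apply_of_ne_of_ne (hakne k hk) (hjT k)]
              exact hπS k
          · exact (hcontraτ π hπ hπi hπj).elim
        · exact hmemC hπ hc
      have hS'F : ∀ σ : Equiv.Perm (Fin n),
          (∀ k, σ (Equiv.swap i j (a k)) = Equiv.swap i j (a k)) → σ ∈ F := by
        intro σ hσ'
        have hσj : σ j = j := by
          have h1 := hσ' k₀
          rwa [hk₀, swap_apply_left] at h1
        have hσT : ∀ k, k ≠ k₀ → σ (a k) = a k := by
          intro k hk
          have h1 := hσ' k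
          rwa [swap_apply_of_ne_of_ne (hakne k hk) (hjT k)] at h1
        by_cases hσi : σ i = i
        · have hσS : σ ∈ compFam i j F := by
            rw [hS]
            intro k
            by_cases hk : k = k₀
            · subst hk; rw [hk₀]; exact hσi
            · exact hσT k hk
          obtain ⟨w, hwF, hfw⟩ := hσS
          by_cases hc : compPerm i j w ∈ F
          · simp only [if_pos hc] at hfw
            rwa [hfw] at hwF
          · simp only [if_neg hc] at hfw
            exfalso
            have hcondw : w i ≠ i ∧ w j = j := by
              by_contra hcc
              exact hc (by rw [compPerm_eq_self hcc]; exact hwF)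
            have hwi_j : w i ≠ j := fun hh => hijne (w.injective (hh.trans hcondw.2.symm))
            have h1 : σ j = w i := by
              rw [← hfw, compPerm_eq_conj hijne hcondw.1 hcondw.2, Perm.mul_apply,
                Perm.mul_apply, swap_apply_right,
                swap_apply_of_ne_of_ne hcondw.1 hwi_j]
            exact hwi_j (by rw [← h1, hσj])
        · have hσi_j : σ i ≠ j := fun hh => hijne (σ.injective (hh.trans hσj.symm))
          have hρσS : compPerm i j σ ∈ compFam i j F := by
            rw [hS]
            intro k
            rw [compPerm_eq_conj hijne hσi hσj]
            by_cases hk : k = k₀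
            · subst hk
              rw [hk₀, Perm.mul_apply, Perm.mul_apply, swap_apply_left, hσj,
                swap_apply_right]
            · rw [Perm.mul_apply, Perm.mul_apply,
                swap_apply_of_ne_of_ne (hakne k hk) (hjT k), hσT k hk,
                swap_apply_of_ne_of_ne (hakne k hk) (hjT k)]
          obtain ⟨w, hwF, hfw⟩ := hρσS
          by_cases hc : compPerm i j w ∈ F
          · simp only [if_pos hc] at hfw
            exfalso
            have h1 := hFS' w hwF k₀
            rw [hk₀, swap_apply_left, hfw, compPerm_eq_conj hijne hσi hσj,
              Perm.mul_apply, Perm.mul_apply, swap_apply_right,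
              swap_apply_of_ne_of_ne hσi hσi_j] at h1
            exact hσi_j h1
          · simp only [if_neg hc] at hfw
            have hcondw : w i ≠ i ∧ w j = j := by
              by_contra hcc
              exact hc (by rw [compPerm_eq_self hcc]; exact hwF)
            rw [compPerm_eq_conj hijne hcondw.1 hcondw.2,
              compPerm_eq_conj hijne hσi hσj] at hfw
            have hww : w = σ := mul_left_cancel (mul_right_cancel hfw)
            rwa [← hww]
      refine ⟨a.trans (Equiv.swap i j).toEmbedding, Set.Subset.antisymm ?_ ?_⟩
      · intro σ hσ k
        simpa using hFS' σ hσ k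
      · intro σ hσ
        refine hS'F σ fun k => ?_
        simpa using hσ k
    · push_neg at hiT
      have hFS : F ⊆ {σ : Equiv.Perm (Fin n) | ∀ k, σ (a k) = a k} := by
        intro π hπ
        by_cases hc : compPerm i j π ∈ F
        · exact hmemS hπ hc
        · intro k
          have h1 := hmemC hπ hc k
          rwa [swap_apply_of_ne_of_ne (hiT k) (hjT k)] at h1
      have hinj : Set.InjOn (fun σ => if compPerm i j σ ∈ F then σ else compPerm i j σ) F := by
        intro σ hσ π hπ hfe
        dsimp only at hfe
        by_cases h1 : compPerm i j σ ∈ F <;> by_cases h2 : compPerm i j π ∈ F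
        · rwa [if_pos h1, if_pos h2] at hfe
        · rw [if_pos h1, if_neg h2] at hfe
          exact absurd (hfe ▸ hσ) h2
        · rw [if_neg h1, if_pos h2] at hfe
          exact absurd (hfe.symm ▸ hπ) h1
        · rw [if_neg h1, if_neg h2] at hfe
          have hcσ : σ i ≠ i ∧ σ j = j := by
            by_contra hcc
            exact h1 (by rw [compPerm_eq_self hcc]; exact hσ)
          have hcπ : π i ≠ i ∧ π j = j := by
            by_contra hcc
            exact h2 (by rw [compPerm_eq_self hcc]; exact hπ)
          rw [compPerm_eq_conj hijne hcσ.1 hcσ.2, compPerm_eq_conj hijne hcπ.1 hcπ.2] at hfe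
          exact mul_left_cancel (mul_right_cancel hfe)
      have hcard : ({σ : Equiv.Perm (Fin n) | ∀ k, σ (a k) = a k} : Set _).ncard = F.ncard := by
        rw [← hS]
        exact Set.ncard_image_of_injOn hinj
      exact ⟨a, Set.eq_of_subset_of_ncard_le hFS hcard.le (Set.toFinite _)⟩
end
end

section
/- Let F ⊆ S_n be a t-cycle-intersecting family and let n > t+1. Then every generating set g ∈ G(F) is a t-intersecting collection of subsets of [n]. -/
open Equiv Finset
open scoped Classical

noncomputable section

private lemma powMemAux {n : ℕ} {σ : Equiv.Perm (Fin n)} {C : Finset (Fin n)}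
    (h : ∀ x ∈ C, σ x ∈ C) : ∀ (k : ℕ) {x : Fin n}, x ∈ C → (σ ^ k) x ∈ C := by
  intro k
  induction k with
  | zero => intro x hx; simpa using hx
  | succ k ih =>
    intro x hx
    rw [pow_succ, Equiv.Perm.mul_apply]
    exact ih (h x hx)

private lemma existsGoodPerm {n : ℕ} (A : Finset (Fin n)) (hA : Aᶜ.card ≠ 1) :
    ∃ f : Equiv.Perm (Fin n), (∀ x ∈ A, f x = x) ∧ (∀ x : Fin n, f x = x → x ∈ A) ∧
      f.IsCycleOn ↑(Aᶜ) := by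
  obtain ⟨f, hf, hsupp⟩ := Finset.exists_cycleOn Aᶜ
  refine ⟨f, ?_, ?_, hf⟩
  · intro x hx
    by_contra h
    exact Finset.mem_compl.1 (hsupp (Equiv.Perm.mem_support.2 h)) hx
  · intro x hfx
    by_contra hx
    have hxc : x ∈ Aᶜ := Finset.mem_compl.2 hx
    have hnt : (Aᶜ : Finset (Fin n)).Nontrivial := by
      refine Finset.one_lt_card.1 ?_
      have h1 : 1 ≤ Aᶜ.card := Finset.card_pos.2 ⟨x, hxc⟩
      omega
    exact hf.apply_ne hnt (Finset.mem_coe.2 hxc) hfx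

private lemma countAux {n t : ℕ} {S : Finset (Fin n)} (𝒞 : Finset (Finset (Fin n)))
    (ht : t ≤ 𝒞.card) (hne : ∀ C ∈ 𝒞, C.Nonempty) (hsub : ∀ C ∈ 𝒞, C ⊆ S)
    (hdisj : (𝒞 : Set (Finset (Fin n))).Pairwise fun A B => Disjoint A B) :
    t ≤ S.card := by
  have h1 : 𝒞.card ≤ ∑ C ∈ 𝒞, C.card := by
    rw [Finset.card_eq_sum_ones]
    exact Finset.sum_le_sum fun C hC => Finset.card_pos.2 (hne C hC)
  have h2 : ∑ C ∈ 𝒞, C.card = (𝒞.biUnion id).card :=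
    (Finset.card_biUnion fun x hx y hy hxy => hdisj hx hy hxy).symm
  have h3 : 𝒞.biUnion id ⊆ S := by
    intro x hx
    obtain ⟨C, hC, hxC⟩ := Finset.mem_biUnion.1 hx
    exact hsub C hC hxC
  calc t ≤ 𝒞.card := ht
    _ ≤ ∑ C ∈ 𝒞, C.card := h1
    _ = (𝒞.biUnion id).card := h2
    _ ≤ S.card := Finset.card_le_card h3

/-- If `n > t+1` and `F` is a `t`-cycle-intersecting family, then any generating set
of `F` is a `t`-intersecting collection of subsets of `[n]`. -/
theorem stmt10 {n t : ℕ} (hn : t + 1 < n) (F : Set (Equiv.Perm (Fin n)))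
    (hF : TCycleIntersecting t F) (g : Set (Finset (Fin n))) (hg : IsGenSet g F) :
    ∀ A ∈ g, ∀ B ∈ g, t ≤ (A ∩ B).card := by
  intro A hA B hB
  have hcardn : ∀ {X : Finset (Fin n)}, X ∈ g → Xᶜ.card ≠ 1 := by
    intro X hX hcontra
    have h1 := hg.1 X hX
    have h2 : Xᶜ.card = n - X.card := by
      rw [Finset.card_compl, Fintype.card_fin]
    have h3 : X.card ≤ n := by
      simpa using Finset.card_le_card (Finset.subset_univ X)
    omega
  obtain ⟨fA, hfA1, hfA2, hfA3⟩ := existsGoodPerm A (hcardn hA)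
  obtain ⟨fB, hfB1, hfB2, hfB3⟩ := existsGoodPerm B (hcardn hB)
  have memF : ∀ (X : Finset (Fin n)), X ∈ g → ∀ f : Equiv.Perm (Fin n),
      (∀ x ∈ X, f x = x) → f ∈ F := by
    intro X hX f hf
    rw [← hg.2]
    exact Set.mem_iUnion₂.2 ⟨X, hX, hf⟩
  by_cases hAB : A = B
  · subst hAB
    obtain ⟨𝒞, ht, hcyc, hdisj⟩ :=
      hF fA (memF A hA fA hfA1) 1 (memF A hA 1 (fun x _ => rfl))
    refine countAux 𝒞 ht (fun C hC => (hcyc C hC).1) ?_ hdisj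
    intro C hC x hx
    obtain ⟨hne, hσ, hπ, hagree, hcycle⟩ := hcyc C hC
    have hfix : fA x = x := by simpa using hagree x hx
    exact Finset.mem_inter.2 ⟨hfA2 x hfix, hfA2 x hfix⟩
  · obtain ⟨𝒞, ht, hcyc, hdisj⟩ :=
      hF fA (memF A hA fA hfA1) fB (memF B hB fB hfB1)
    refine countAux 𝒞 ht (fun C hC => (hcyc C hC).1) ?_ hdisj
    intro C hC x hx
    obtain ⟨hne, hσ, hπ, hagree, hcycle⟩ := hcyc C hC
    by_cases hfix : ∀ y ∈ C, fA y = y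
    · have h1 : fA x = x := hfix x hx
      have h2 : fB x = x := (hagree x hx).symm.trans h1
      exact Finset.mem_inter.2 ⟨hfA2 x h1, hfB2 x h2⟩
    · exfalso
      push_neg at hfix
      obtain ⟨x0, hx0C, hx0⟩ := hfix
      have hx0A : x0 ∈ Aᶜ := Finset.mem_compl.2 (fun h => hx0 (hfA1 x0 h))
      have hx0B : x0 ∈ Bᶜ := Finset.mem_compl.2
        (fun h => hx0 (by rw [hagree x0 hx0C]; exact hfB1 x0 h))
      have hntA : (Aᶜ : Finset (Fin n)).Nontrivial := Finset.one_lt_card.1 (by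
        have h1 := Finset.card_pos.2 ⟨x0, hx0A⟩
        have h2 := hcardn hA
        omega)
      have hntB : (Bᶜ : Finset (Fin n)).Nontrivial := Finset.one_lt_card.1 (by
        have h1 := Finset.card_pos.2 ⟨x0, hx0B⟩
        have h2 := hcardn hB
        omega)
      have hsubAB : Aᶜ ⊆ Bᶜ := by
        intro y hy
        have hsc : fA.SameCycle x0 y := hfA3.2 (Finset.mem_coe.2 hx0A) (Finset.mem_coe.2 hy)
        obtain ⟨k, -, -, hk⟩ := hsc.exists_pow_eq''
        have hyC : y ∈ C := hk ▸ powMemAux hσ k hx0C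
        have hfAy : fA y ≠ y := hfA3.apply_ne hntA (Finset.mem_coe.2 hy)
        exact Finset.mem_compl.2
          (fun hyB => hfAy (by rw [hagree y hyC]; exact hfB1 y hyB))
      have hsubBA : Bᶜ ⊆ Aᶜ := by
        intro y hy
        have hsc : fB.SameCycle x0 y := hfB3.2 (Finset.mem_coe.2 hx0B) (Finset.mem_coe.2 hy)
        obtain ⟨k, -, -, hk⟩ := hsc.exists_pow_eq''
        have hyC : y ∈ C := hk ▸ powMemAux hπ k hx0C
        have hfBy : fB y ≠ y := hfB3.apply_ne hntB (Finset.mem_coe.2 hy)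
        exact Finset.mem_compl.2
          (fun hyA => hfBy (by rw [← hagree y hyC]; exact hfA1 y hyA))
      exact hAB (compl_inj_iff.1 (Finset.Subset.antisymm hsubAB hsubBA))
end
end

section
/- Let F ⊆ S_n be a t-cycle-intersecting family that is maximal, fixed and compressed, and let g be any generating set of F. Then: (1) L_*(g) is a generating set of F; (2) s⁺(L_*(g)) ≤ s⁺(g); and (3) for any set B that can be obtained by left-shifting a set in g (i.e. B ∈ L(B′) for some B′ ∈ g), either B or a proper subset of B lies in L_*(g). -/
open Equiv Finset
open scoped Classical

noncomputable section

/-!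
A compressed family is closed under replacing one required fixed point `b` by a smaller
non-required point `a`: a permutation fixing `a` but not `b` is the `(a,b)`-compression of its
conjugate by the transposition `(a b)`, which fixes `b`. Every left shift of a set is reached by
finitely many such replacements (each lowers the sum of the elements), so all of `Up(L(g))` lies
in `F`. Since every member of `L(g)` contains a minimal one, `Up(L_*(g)) = Up(L(g)) = F`, and
left shifts can only lower `s⁺`.
-/

variable {n : ℕ}

lemma IsCompressedFam.compPerm_mem {F : Set (Equiv.Perm (Fin n))} (hcomp : IsCompressedFam F)
    {i j : Fin n} (hij : i < j) {σ : Equiv.Perm (Fin n)} (hσ : σ ∈ F) :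
    compPerm i j σ ∈ F := by
  by_contra h
  have hmem : compPerm i j σ ∈ compFam i j F := ⟨σ, hσ, if_neg h⟩
  rw [hcomp i j hij] at hmem
  exact h hmem

lemma compPerm_swap_conj {a b : Fin n} (hab : a ≠ b) {σ : Equiv.Perm (Fin n)} (ha : σ a = a)
    (hb : σ b ≠ b) : compPerm a b (swap a b * σ * swap a b) = σ := by
  have hba : σ b ≠ a := fun h => hab (σ.injective (h.trans ha.symm)).symm
  have hτa : (swap a b * σ * swap a b) a = σ b := by
    simp [swap_apply_of_ne_of_ne hba hb]
  have hτb : (swap a b * σ * swap a b) b = b := by simp [ha]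
  have hconj : swap a (σ b) = σ * swap a b * σ⁻¹ := by rw [← swap_apply_apply, ha]
  rw [compPerm, if_pos ⟨hτa.trans_ne hba, hτb⟩, hτa, hconj]
  simp [mul_assoc]

lemma UpSet_insert_erase_subset {F : Set (Equiv.Perm (Fin n))} (hcomp : IsCompressedFam F)
    {B : Finset (Fin n)} (hBF : UpSet B ⊆ F) {a b : Fin n} (ha : a ∉ B) (hab : a < b) :
    UpSet (insert a (B.erase b)) ⊆ F := by
  intro σ hσ
  have hσa : σ a = a := hσ a (mem_insert_self _ _)
  have hσB : ∀ x ∈ B, x ≠ b → σ x = x := fun x hx hxb =>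
    hσ x (mem_insert_of_mem (mem_erase.2 ⟨hxb, hx⟩))
  by_cases hσb : σ b = b
  · exact hBF fun x hx => if hxb : x = b then hxb ▸ hσb else hσB x hx hxb
  have hτ : swap a b * σ * swap a b ∈ UpSet B := by
    intro x hx
    by_cases hxb : x = b
    · simp [hxb, hσa]
    · have hxa : x ≠ a := fun h => ha (h ▸ hx)
      simp [swap_apply_of_ne_of_ne hxa hxb, hσB x hx hxb]
  rw [← compPerm_swap_conj hab.ne hσa hσb]
  exact hcomp.compPerm_mem hab (hBF hτ)

lemma mem_LSet_iff {A B : Finset (Fin n)} {k : ℕ} (hA : A.card = k) (hB : B.card = k) :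
    A ∈ LSet B ↔ ∀ i : Fin k, A.orderEmbOfFin hA i ≤ B.orderEmbOfFin hB i := by
  subst hB
  exact ⟨fun ⟨_, h⟩ => h, fun h => ⟨hA, h⟩⟩

lemma mem_LSet_self (B : Finset (Fin n)) : B ∈ LSet B :=
  ⟨rfl, fun _ => le_rfl⟩

lemma StrictMono.update {α β : Type*} [LinearOrder α] [Preorder β] [DecidableEq α]
    {f : α → β} (hf : StrictMono f) {i : α} {x : β} (hlt : ∀ j < i, f j < x)
    (hgt : ∀ j, i < j → x < f j) : StrictMono (Function.update f i x) := by
  intro p q hpq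
  by_cases hp : p = i <;> by_cases hq : q = i
  · exact absurd (hp.trans hq.symm) hpq.ne
  · simpa [hp, Function.update_of_ne hq] using hgt q (hp ▸ hpq)
  · simpa [hq, Function.update_of_ne hp] using hlt p (hq ▸ hpq)
  · simpa [Function.update_of_ne hp, Function.update_of_ne hq] using hf hpq

/-- Take the first position where the sorted sequences of `A` and `B` differ. -/
lemma exists_mem_LSet_insert_erase {A B : Finset (Fin n)} (hAB : A ∈ LSet B) (hne : A ≠ B) :
    ∃ b ∈ B, ∃ a ∉ B, a < b ∧ A ∈ LSet (insert a (B.erase b)) := by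
  obtain ⟨hA, hle⟩ := hAB
  set α := A.orderEmbOfFin hA
  set β := B.orderEmbOfFin rfl
  have hdiff : {i | α i ≠ β i}.Nonempty := by
    by_contra! h
    refine hne (Finset.coe_injective ?_)
    rw [← range_orderEmbOfFin A hA, ← range_orderEmbOfFin B rfl]
    exact congrArg Set.range (funext fun i => not_not.1 fun hi => h.subset hi)
  obtain ⟨i, hi, hmin⟩ := wellFounded_lt.has_min _ hdiff
  have hbefore : ∀ j < i, α j = β j := fun j hj => not_not.1 fun h => hmin j h hj
  have hlt : α i < β i := (hle i).lt_of_ne hi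
  have hαB : α i ∉ B := by
    intro hmem
    rw [← Finset.mem_coe, ← range_orderEmbOfFin B rfl] at hmem
    obtain ⟨j, hj⟩ := hmem
    rcases lt_or_ge j i with hji | hij
    · exact hji.ne (α.injective ((hbefore j hji).trans hj))
    · exact (hj ▸ β.monotone hij).not_gt hlt
  have hβB : β i ∈ B := orderEmbOfFin_mem B rfl i
  have hαB' : α i ∉ B.erase (β i) := fun h => hαB (mem_of_mem_erase h)
  have hcard : (insert (α i) (B.erase (β i))).card = B.card := by
    rw [card_insert_of_notMem hαB', card_erase_add_one hβB]
  have horder :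
      Function.update β i (α i) = (insert (α i) (B.erase (β i))).orderEmbOfFin hcard := by
    refine orderEmbOfFin_unique hcard (fun j => ?_) (β.strictMono.update
      (fun j hj => hbefore j hj ▸ α.strictMono hj) fun j hj => hlt.trans (β.strictMono hj))
    rcases eq_or_ne j i with rfl | hj
    · simp
    · rw [Function.update_of_ne hj]
      exact mem_insert_of_mem (mem_erase.2 ⟨β.injective.ne hj, orderEmbOfFin_mem B rfl j⟩)
  refine ⟨β i, hβB, α i, hαB, hlt, (mem_LSet_iff hA hcard).2 fun j => ?_⟩
  rw [← horder]
  rcases eq_or_ne j i with rfl | hj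
  · simp [α]
  · rw [Function.update_of_ne hj]
    exact hle j

lemma sum_insert_erase_lt {α : Type*} [DecidableEq α] {f : α → ℕ} {B : Finset α} {a b : α}
    (hb : b ∈ B) (ha : a ∉ B) (hab : f a < f b) :
    ∑ x ∈ insert a (B.erase b), f x < ∑ x ∈ B, f x := by
  rw [sum_insert fun h => ha (mem_of_mem_erase h), ← sum_erase_add B f hb]
  omega

lemma UpSet_subset_of_mem_LSet {F : Set (Equiv.Perm (Fin n))} (hcomp : IsCompressedFam F)
    {A B : Finset (Fin n)} (hAB : A ∈ LSet B) (hBF : UpSet B ⊆ F) : UpSet A ⊆ F := by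
  by_cases hne : A = B
  · exact hne ▸ hBF
  obtain ⟨b, hb, a, ha, hab, hA⟩ := exists_mem_LSet_insert_erase hAB hne
  exact UpSet_subset_of_mem_LSet hcomp hA (UpSet_insert_erase_subset hcomp hBF ha hab)
termination_by ∑ x ∈ B, (x : ℕ)
decreasing_by exact sum_insert_erase_lt hb ha hab

lemma exists_mem_Lstar_subset {g : Set (Finset (Fin n))} {B : Finset (Fin n)}
    (hB : B ∈ LFam g) : ∃ A ∈ Lstar g, A ⊆ B := by
  obtain ⟨A, hAB, hA⟩ := (Set.toFinite (LFam g)).exists_le_minimal hB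
  exact ⟨A, ⟨hA.1, fun A' hA' h => le_antisymm h (hA.2 hA' h)⟩, hAB⟩

lemma UpSet_anti {A B : Finset (Fin n)} (h : A ⊆ B) : UpSet B ⊆ UpSet A :=
  fun _ hσ x hx => hσ x (h hx)

lemma UpFam_Lstar {g : Set (Finset (Fin n))} (hcomp : IsCompressedFam (UpFam g)) :
    UpFam (Lstar g) = UpFam g := by
  apply Set.Subset.antisymm
  · refine Set.iUnion₂_subset fun A hA => ?_
    obtain ⟨B, hB, hAB⟩ := Set.mem_iUnion₂.1 hA.1
    exact UpSet_subset_of_mem_LSet hcomp hAB (Set.subset_biUnion_of_mem hB)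
  · refine Set.iUnion₂_subset fun B hB => ?_
    obtain ⟨A, hA, hAB⟩ := exists_mem_Lstar_subset (Set.mem_biUnion hB (mem_LSet_self B))
    exact (UpSet_anti hAB).trans (Set.subset_biUnion_of_mem (u := UpSet) hA)

lemma sPlus_le_of_mem_LSet {A B : Finset (Fin n)} (h : A ∈ LSet B) : sPlus A ≤ sPlus B := by
  obtain ⟨hA, hle⟩ := h
  refine Finset.sup_le fun x hx => ?_
  rw [← Finset.mem_coe, ← range_orderEmbOfFin A hA] at hx
  obtain ⟨i, rfl⟩ := hx
  exact (Nat.add_le_add_right (hle i) 1).trans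
    (Finset.le_sup (f := fun x : Fin n => (x : ℕ) + 1) (orderEmbOfFin_mem B rfl i))

lemma sPlusFam_Lstar_le (g : Set (Finset (Fin n))) : sPlusFam (Lstar g) ≤ sPlusFam g := by
  refine csSup_le' ?_
  rintro _ ⟨A, hA, rfl⟩
  obtain ⟨B, hB, hAB⟩ := Set.mem_iUnion₂.1 hA.1
  exact (sPlus_le_of_mem_LSet hAB).trans
    (le_csSup (Set.toFinite _).bddAbove (Set.mem_image_of_mem sPlus hB))

theorem stmt12_general {n : ℕ} (F : Set (Equiv.Perm (Fin n)))
    (hcomp : IsCompressedFam F)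
    (g : Set (Finset (Fin n))) (hg : IsGenSet g F) :
    IsGenSet (Lstar g) F ∧ sPlusFam (Lstar g) ≤ sPlusFam g ∧
      ∀ B ∈ LFam g, ∃ A ∈ Lstar g, A ⊆ B := by
  obtain ⟨hcard, rfl⟩ := hg
  refine ⟨⟨fun A hA => ?_, UpFam_Lstar hcomp⟩, sPlusFam_Lstar_le g,
    fun B hB => exists_mem_Lstar_subset hB⟩
  obtain ⟨B, hB, hAB⟩ := Set.mem_iUnion₂.1 hA.1
  rw [hAB.fst]
  exact hcard B hB

/-- For a maximal, fixed and compressed `t`-cycle-intersecting family `F` and any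
generating set `g` of `F`: (1) `L_*(g)` is a generating set of `F`;
(2) `s⁺(L_*(g)) ≤ s⁺(g)`; (3) any left-shift of a set of `g` contains (possibly
properly) a member of `L_*(g)`. -/
theorem stmt12 {n t : ℕ} (F : Set (Equiv.Perm (Fin n)))
    (hF : TCycleIntersecting t F)
    (hmax : ∀ σ ∉ F, ¬ TCycleIntersecting t (insert σ F))
    (hfix : IsFixedFam F) (hcomp : IsCompressedFam F)
    (g : Set (Finset (Fin n))) (hg : IsGenSet g F) :
    IsGenSet (Lstar g) F ∧ sPlusFam (Lstar g) ≤ sPlusFam g ∧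
      ∀ B ∈ LFam g, ∃ A ∈ Lstar g, A ⊆ B :=
  stmt12_general F hcomp g hg
end
end

section
/- Let F ⊆ S_n be a t-cycle-intersecting family that is maximal, compressed and fixed, and let n > t+1. Let E_1, E_2 be sets in a generating set g ∈ G_*(F). If there exist i < j ∈ [n] such that i ∉ E_1 ∪ E_2 and j ∈ E_1 ∩ E_2, then |E_1 ∩ E_2| ≥ t+1. -/
open Equiv Finset
open scoped Classical

noncomputable section

lemma auxPowMem {n : ℕ} (σ : Equiv.Perm (Fin n)) (S : Finset (Fin n))
    (h : ∀ x ∈ S, σ x ∈ S) (k : ℕ) : ∀ x ∈ S, (σ ^ k) x ∈ S := by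
  induction k with
  | zero => simp
  | succ k ih =>
    intro x hx
    rw [pow_succ, Equiv.Perm.mul_apply]
    exact ih (σ x) (h x hx)

lemma auxPowAgree {n : ℕ} (σ π : Equiv.Perm (Fin n)) (B : Finset (Fin n))
    (hσB : ∀ x ∈ B, σ x ∈ B) (hag : ∀ x ∈ B, σ x = π x) (k : ℕ) :
    ∀ x ∈ B, (σ ^ k) x = (π ^ k) x := by
  induction k with
  | zero => simp
  | succ k ih =>
    intro x hx
    rw [pow_succ, Equiv.Perm.mul_apply, pow_succ, Equiv.Perm.mul_apply, ← hag x hx]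
    exact ih (σ x) (hσB x hx)

lemma auxTransfer {n : ℕ} (σ π : Equiv.Perm (Fin n)) (B : Finset (Fin n))
    (hσB : ∀ x ∈ B, σ x ∈ B) (hag : ∀ x ∈ B, σ x = π x)
    {x y : Fin n} (hx : x ∈ B) (hy : y ∈ B) (h : σ.SameCycle x y) :
    π.SameCycle x y := by
  obtain ⟨k, -, hk⟩ := h.exists_pow_eq'
  exact ⟨k, by rw [zpow_natCast, ← auxPowAgree σ π B hσB hag k x hx, hk]⟩

lemma auxBEq {n : ℕ} (σ : Equiv.Perm (Fin n)) (s B : Finset (Fin n))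
    (hc : σ.IsCycleOn ↑s) (hσB : ∀ x ∈ B, σ x ∈ B)
    (hsame : ∀ x ∈ B, ∀ y ∈ B, σ.SameCycle x y)
    (x : Fin n) (hxB : x ∈ B) (hxs : x ∈ s) : B = s := by
  have hmapss : ∀ z ∈ s, σ z ∈ s := fun z hz => by
    exact_mod_cast hc.1.mapsTo (by exact_mod_cast hz)
  apply Finset.Subset.antisymm
  · intro y hy
    obtain ⟨k, -, hk⟩ := (hsame x hxB y hy).exists_pow_eq'
    rw [← hk]
    exact auxPowMem σ s hmapss k x hxs
  · intro a ha
    obtain ⟨k, -, hk⟩ := hc.exists_pow_eq (by exact_mod_cast hxs) (by exact_mod_cast ha)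
    rw [← hk]
    exact auxPowMem σ B hσB k x hxB

/-- For a maximal, compressed and fixed `t`-cycle-intersecting family `F` with
`n > t+1`, a generating set `g ∈ G_*(F)` and `E₁, E₂ ∈ g`: if some `i < j` satisfy
`i ∉ E₁ ∪ E₂` and `j ∈ E₁ ∩ E₂`, then `|E₁ ∩ E₂| ≥ t+1`. -/
theorem stmt13 {n t : ℕ} (hn : t + 1 < n) (F : Set (Equiv.Perm (Fin n)))
    (hF : TCycleIntersecting t F)
    (hmax : ∀ σ ∉ F, ¬ TCycleIntersecting t (insert σ F))
    (hcomp : IsCompressedFam F) (hfix : IsFixedFam F)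
    (g : Set (Finset (Fin n))) (hg : IsGenSet g F) (hstar : Lstar g = g)
    (E₁ E₂ : Finset (Fin n)) (hE₁ : E₁ ∈ g) (hE₂ : E₂ ∈ g)
    (i j : Fin n) (hij : i < j) (hi : i ∉ E₁ ∪ E₂) (hj : j ∈ E₁ ∩ E₂) :
    t + 1 ≤ (E₁ ∩ E₂).card := by
    classical
  -- unpack position hypotheses
  have hij' : i ≠ j := ne_of_lt hij
  rw [Finset.mem_union] at hi
  push_neg at hi
  obtain ⟨hi1, hi2⟩ := hi
  rw [Finset.mem_inter] at hj
  obtain ⟨hj1, hj2⟩ := hj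
  -- the complements
  set s₁ : Finset (Fin n) := E₁ᶜ with hs₁def
  set s₂ : Finset (Fin n) := E₂ᶜ with hs₂def
  obtain ⟨σ₁, hc₁, hsupp₁⟩ := Finset.exists_cycleOn s₁
  obtain ⟨σ₂, hc₂, hsupp₂⟩ := Finset.exists_cycleOn s₂
  have hfix₁ : ∀ x ∉ s₁, σ₁ x = x := fun x hx => by
    by_contra h
    exact hx (hsupp₁ (Equiv.Perm.mem_support.2 h))
  have hfix₂ : ∀ x ∉ s₂, σ₂ x = x := fun x hx => by
    by_contra h
    exact hx (hsupp₂ (Equiv.Perm.mem_support.2 h))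
  have hi1s : i ∈ s₁ := Finset.mem_compl.2 hi1
  have hi2s : i ∈ s₂ := Finset.mem_compl.2 hi2
  have hj1s : j ∉ s₁ := fun h => (Finset.mem_compl.1 h) hj1
  have hj2s : j ∉ s₂ := fun h => (Finset.mem_compl.1 h) hj2
  -- cardinalities
  have hcard₁ : 2 ≤ s₁.card := by
    have h1 : s₁.card = n - E₁.card := by
      rw [hs₁def, Finset.card_compl, Fintype.card_fin]
    have h2 : E₁.card ≤ n := by simpa using Finset.card_le_univ E₁
    have h3 : E₁.card ≠ n - 1 := hg.1 E₁ hE₁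
    have h4 : 1 ≤ s₁.card := Finset.card_pos.2 ⟨i, hi1s⟩
    omega
  have hcard₂ : 2 ≤ s₂.card := by
    have h1 : s₂.card = n - E₂.card := by
      rw [hs₂def, Finset.card_compl, Fintype.card_fin]
    have h2 : E₂.card ≤ n := by simpa using Finset.card_le_univ E₂
    have h3 : E₂.card ≠ n - 1 := hg.1 E₂ hE₂
    have h4 : 1 ≤ s₂.card := Finset.card_pos.2 ⟨i, hi2s⟩
    omega
  have hnt₁ : (↑s₁ : Set (Fin n)).Nontrivial := by
    obtain ⟨a, ha, b, hb, hab⟩ := Finset.one_lt_card.1 hcard₁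
    exact ⟨a, by exact_mod_cast ha, b, by exact_mod_cast hb, hab⟩
  have hnt₂ : (↑s₂ : Set (Fin n)).Nontrivial := by
    obtain ⟨a, ha, b, hb, hab⟩ := Finset.one_lt_card.1 hcard₂
    exact ⟨a, by exact_mod_cast ha, b, by exact_mod_cast hb, hab⟩
  -- σ₁, σ₂ belong to F
  have hσ₁F : σ₁ ∈ F := by
    rw [← hg.2]
    exact Set.mem_biUnion hE₁ (fun x hx => hfix₁ x (fun h => (Finset.mem_compl.1 h) hx))
  have hσ₂F : σ₂ ∈ F := by
    rw [← hg.2]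
    exact Set.mem_biUnion hE₂ (fun x hx => hfix₂ x (fun h => (Finset.mem_compl.1 h) hx))
  -- the conjugated permutation τ
  set w : Equiv.Perm (Fin n) := Equiv.swap i j with hwdef
  set τ : Equiv.Perm (Fin n) := w * σ₂ * w with hτdef
  have hσ₂j : σ₂ j = j := hfix₂ j hj2s
  have hvmem : σ₂ i ∈ s₂ := by
    have := hc₂.1.mapsTo (show i ∈ (↑s₂ : Set (Fin n)) from by exact_mod_cast hi2s)
    exact_mod_cast this
  have hvne_i : σ₂ i ≠ i := hc₂.apply_ne hnt₂ (by exact_mod_cast hi2s)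
  have hvne_j : σ₂ i ≠ j := fun h => hj2s (h ▸ hvmem)
  -- τ equals the compression of σ₂
  have hτeq : τ = compPerm i j σ₂ := by
    have hcp : compPerm i j σ₂ = (Equiv.swap i (σ₂ i) * Equiv.swap i j) * σ₂ := by
      unfold compPerm
      exact if_pos ⟨hvne_i, hσ₂j⟩
    rw [hcp, hτdef, hwdef]
    apply Equiv.ext
    intro x
    simp only [Equiv.Perm.mul_apply]
    rcases eq_or_ne x i with hxi | hxi
    · rw [hxi]
      have l : (Equiv.swap i j) (σ₂ ((Equiv.swap i j) i)) = i := by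
        rw [Equiv.swap_apply_left, hσ₂j, Equiv.swap_apply_right]
      have r : (Equiv.swap i (σ₂ i)) ((Equiv.swap i j) (σ₂ i)) = i := by
        rw [Equiv.swap_apply_of_ne_of_ne hvne_i hvne_j, Equiv.swap_apply_right]
      rw [l, r]
    · rcases eq_or_ne x j with hxj | hxj
      · rw [hxj]
        have l : (Equiv.swap i j) (σ₂ ((Equiv.swap i j) j)) = σ₂ i := by
          rw [Equiv.swap_apply_right, Equiv.swap_apply_of_ne_of_ne hvne_i hvne_j]
        have r : (Equiv.swap i (σ₂ i)) ((Equiv.swap i j) (σ₂ j)) = σ₂ i := by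
          rw [hσ₂j, Equiv.swap_apply_right, Equiv.swap_apply_left]
        rw [l, r]
      · have hne_j : σ₂ x ≠ j := fun h => hxj (σ₂.injective (h.trans hσ₂j.symm))
        have hne_v : σ₂ x ≠ σ₂ i := fun h => hxi (σ₂.injective h)
        have l0 : (Equiv.swap i j) (σ₂ ((Equiv.swap i j) x)) = (Equiv.swap i j) (σ₂ x) := by
          rw [Equiv.swap_apply_of_ne_of_ne hxi hxj]
        rcases eq_or_ne (σ₂ x) i with hxi2 | hxi2
        · have l : (Equiv.swap i j) (σ₂ x) = j := by rw [hxi2, Equiv.swap_apply_left]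
          have r : (Equiv.swap i (σ₂ i)) ((Equiv.swap i j) (σ₂ x)) = j := by
            rw [hxi2, Equiv.swap_apply_left,
              Equiv.swap_apply_of_ne_of_ne (Ne.symm hij') (fun h => hvne_j h.symm)]
          rw [l0, r, l]
        · have l : (Equiv.swap i j) (σ₂ x) = σ₂ x :=
            Equiv.swap_apply_of_ne_of_ne hxi2 hne_j
          have r : (Equiv.swap i (σ₂ i)) ((Equiv.swap i j) (σ₂ x)) = σ₂ x := by
            rw [l, Equiv.swap_apply_of_ne_of_ne hxi2 hne_v]
          rw [l0, r, l]
  -- τ belongs to F by compressedness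
  have hτF : τ ∈ F := by
    have hcF : compFam i j F = F := hcomp i j hij
    have himg : (fun σ => if compPerm i j σ ∈ F then σ else compPerm i j σ) σ₂
        ∈ compFam i j F := Set.mem_image_of_mem _ hσ₂F
    rw [hcF] at himg
    by_cases hmem : compPerm i j σ₂ ∈ F
    · rw [hτeq]; exact hmem
    · simp only [if_neg hmem] at himg
      exact absurd himg hmem
  -- structure of τ
  set s₂' : Finset (Fin n) := s₂.image w with hs₂'def
  have hww : ∀ x : Fin n, w (w x) = x := fun x => Equiv.swap_apply_self i j x
  have hcτ : τ.IsCycleOn ↑s₂' := by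
    have h := hc₂.conj (g := w)
    rw [show w⁻¹ = w from Equiv.swap_inv i j] at h
    rw [hs₂'def, Finset.coe_image]
    exact h
  have hcard₂' : 2 ≤ s₂'.card := by
    rw [hs₂'def, Finset.card_image_of_injective _ w.injective]
    exact hcard₂
  have hnt₂' : (↑s₂' : Set (Fin n)).Nontrivial := by
    obtain ⟨a, ha, b, hb, hab⟩ := Finset.one_lt_card.1 hcard₂'
    exact ⟨a, by exact_mod_cast ha, b, by exact_mod_cast hb, hab⟩
  have hfixτ : ∀ x ∉ s₂', τ x = x := by
    intro x hx
    have hwx : w x ∉ s₂ := fun h => hx (Finset.mem_image.2 ⟨w x, h, hww x⟩)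
    show w (σ₂ (w x)) = x
    rw [hfix₂ (w x) hwx, hww x]
  have hjs₂' : j ∈ s₂' := Finset.mem_image.2 ⟨i, hi2s, Equiv.swap_apply_left i j⟩
  -- get the common cycles
  obtain ⟨𝒞, h𝒞card, h𝒞cc, h𝒞disj⟩ := hF σ₁ hσ₁F τ hτF
  -- every common cycle lies in (E₁ ∩ E₂).erase j
  have hBsub : ∀ B ∈ 𝒞, B ⊆ (E₁ ∩ E₂).erase j := by
    intro B hB
    obtain ⟨hBne, hBσ, hBτ, hBag, hBsc⟩ := h𝒞cc B hB
    have hBscτ : ∀ x ∈ B, ∀ y ∈ B, τ.SameCycle x y := fun x hx y hy =>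
      auxTransfer σ₁ τ B hBσ hBag hx hy (hBsc x hx y hy)
    have hnot : ¬ ((∃ x ∈ B, x ∈ s₁) ∨ (∃ x ∈ B, x ∈ s₂')) := by
      rintro (⟨x, hxB, hxs⟩ | ⟨x, hxB, hxs⟩)
      · have hB1 : B = s₁ := auxBEq σ₁ s₁ B hc₁ hBσ hBsc x hxB hxs
        have hx2 : ∃ y ∈ B, y ∈ s₂' := by
          by_contra h
          push_neg at h
          have hτx : τ x = x := hfixτ x (h x hxB)
          exact (hc₁.apply_ne hnt₁ (by exact_mod_cast hxs)) ((hBag x hxB).trans hτx)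
        obtain ⟨y, hyB, hys⟩ := hx2
        have hB2 : B = s₂' := auxBEq τ s₂' B hcτ hBτ hBscτ y hyB hys
        rw [hB1] at hB2
        rw [← hB2] at hjs₂'
        exact hj1s hjs₂'
      · have hB2 : B = s₂' := auxBEq τ s₂' B hcτ hBτ hBscτ x hxB hxs
        have hx1 : ∃ y ∈ B, y ∈ s₁ := by
          by_contra h
          push_neg at h
          have hσx : σ₁ x = x := hfix₁ x (h x hxB)
          exact (hcτ.apply_ne hnt₂' (by exact_mod_cast hxs)) ((hBag x hxB).symm.trans hσx)
        obtain ⟨y, hyB, hys⟩ := hx1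
        have hB1 : B = s₁ := auxBEq σ₁ s₁ B hc₁ hBσ hBsc y hyB hys
        rw [hB1] at hB2
        rw [← hB2] at hjs₂'
        exact hj1s hjs₂'
    push_neg at hnot
    obtain ⟨hns₁, hns₂'⟩ := hnot
    intro y hy
    have h1 : y ∈ E₁ := by
      have := hns₁ y hy
      rw [hs₁def, Finset.mem_compl, not_not] at this
      exact this
    have h2' : y ∉ s₂' := hns₂' y hy
    have hyj : y ≠ j := fun h => h2' (h ▸ hjs₂')
    have hyi : y ≠ i := fun h => hi1 (h ▸ h1)
    have h2 : y ∈ E₂ := by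
      by_contra hE
      exact h2' (Finset.mem_image.2 ⟨y, Finset.mem_compl.2 hE,
        Equiv.swap_apply_of_ne_of_ne hyi hyj⟩)
    exact Finset.mem_erase.2 ⟨hyj, Finset.mem_inter.2 ⟨h1, h2⟩⟩
  -- counting
  have hjmem : j ∈ E₁ ∩ E₂ := Finset.mem_inter.2 ⟨hj1, hj2⟩
  have hcount : 𝒞.card ≤ ((E₁ ∩ E₂).erase j).card := by
    calc 𝒞.card = ∑ B ∈ 𝒞, 1 := by simp
      _ ≤ ∑ B ∈ 𝒞, B.card :=
        Finset.sum_le_sum (fun B hB => (h𝒞cc B hB).1.card_pos)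
      _ = (𝒞.biUnion id).card :=
        (Finset.card_biUnion (fun x hx y hy hxy =>
          h𝒞disj (Finset.mem_coe.2 hx) (Finset.mem_coe.2 hy) hxy)).symm
      _ ≤ ((E₁ ∩ E₂).erase j).card := by
        apply Finset.card_le_card
        intro y hy
        obtain ⟨B, hB, hyB⟩ := Finset.mem_biUnion.1 hy
        exact hBsub B hB hyB
  have herase : ((E₁ ∩ E₂).erase j).card = (E₁ ∩ E₂).card - 1 :=
    Finset.card_erase_of_mem hjmem
  have hpos : 1 ≤ (E₁ ∩ E₂).card := Finset.card_pos.2 ⟨j, hjmem⟩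
  omega
end
end

section
/- Let F ⊆ S_n be a t-cycle-intersecting family that is maximal, fixed and compressed, let g ∈ G_*(F), and choose Ê ∈ g with s⁺(Ê) = s⁺(g). Then D(Ê) = Up(Ê) \ Up(g \ {Ê}), i.e. D(Ê) is exactly the set of permutations in F generated by Ê alone. Furthermore, |D(Ê)| = Σ_{j=0}^{s⁺(Ê)−|Ê|} (−1)^j · C(s⁺(Ê)−|Ê|, j) · (n−|Ê|−j)!. -/
open Equiv Finset
open scoped Classical

noncomputable section

section Helpers

lemma card_upset' {n : ℕ} (A : Finset (Fin n)) :
    (Finset.univ.filter fun σ : Equiv.Perm (Fin n) => ∀ x ∈ A, σ x = x).card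
      = Nat.factorial (n - A.card) := by
  classical
  have e1 : Equiv.Perm {x : Fin n // x ∉ A} ≃
      {σ : Equiv.Perm (Fin n) // ∀ x ∈ A, σ x = x} :=
    (Equiv.Perm.subtypeEquivSubtypePerm (fun x => x ∉ A)).trans
      (Equiv.subtypeEquivRight (fun σ => by
        constructor
        · intro h x hx; exact h x (by simp [hx])
        · intro h x hx; exact h x (by simpa using hx)))
  have h2 : (Finset.univ.filter fun σ : Equiv.Perm (Fin n) => ∀ x ∈ A, σ x = x).card
      = Fintype.card {σ : Equiv.Perm (Fin n) // ∀ x ∈ A, σ x = x} := by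
    rw [Fintype.card_subtype]
  rw [h2, ← Fintype.card_congr e1, Fintype.card_perm]
  congr 1
  have : Fintype.card {x : Fin n // x ∉ A} = n - A.card := by
    rw [Fintype.card_subtype_compl]
    simp [Fintype.card_coe]
  rw [this]

lemma mem_fixSet {n : ℕ} (σ : Equiv.Perm (Fin n)) (x : Fin n) :
    x ∈ fixSet σ ↔ σ x = x := by simp [fixSet]

lemma sPlus_le' {n : ℕ} (E : Finset (Fin n)) : sPlus E ≤ n :=
  Finset.sup_le fun x _ => x.isLt

lemma subset_Ival {n : ℕ} (E : Finset (Fin n)) : E ⊆ Ival n (sPlus E) := by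
  intro x hx
  simp only [Ival, mem_filter, mem_univ, true_and]
  have : (x : ℕ) + 1 ≤ sPlus E :=
    Finset.le_sup (f := fun x : Fin n => (x : ℕ) + 1) hx
  omega

lemma card_Ival {n m : ℕ} (h : m ≤ n) : (Ival n m).card = m := by
  classical
  rw [Ival]
  have := Finset.card_bij (s := Finset.univ.filter fun x : Fin n => (x : ℕ) < m)
    (t := Finset.range m) (fun x _ => (x : ℕ))
    (fun a ha => by simpa using (Finset.mem_filter.1 ha).2)
    (fun a _ b _ hab => Fin.val_injective hab)
    (fun b hb => ⟨⟨b, lt_of_lt_of_le (Finset.mem_range.1 hb) h⟩,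
      by simp [Finset.mem_range.1 hb], rfl⟩)
  simpa using this

lemma card_DSet {n : ℕ} (E : Finset (Fin n)) :
    ((DSet E).ncard : ℤ) = ∑ j ∈ Finset.range (sPlus E - E.card + 1),
      (-1:ℤ)^j * ((sPlus E - E.card).choose j : ℤ)
        * (Nat.factorial (n - E.card - j) : ℤ) := by
  classical
  set s := sPlus E with hs
  set I := Ival n s with hI
  have hEI : E ⊆ I := subset_Ival E
  have hIcard : I.card = s := card_Ival (sPlus_le' E)
  set T := I \ E with hTdef
  have hT : T.card = s - E.card := by rw [hTdef, card_sdiff_of_subset hEI, hIcard]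
  have hdisj : Disjoint E T := by
    rw [hTdef]; exact Finset.disjoint_sdiff
  have h1 : (DSet E).ncard
      = (Finset.univ.filter fun σ : Equiv.Perm (Fin n) => fixSet σ ∩ I = E).card := by
    rw [show DSet E = {σ : Equiv.Perm (Fin n) | fixSet σ ∩ I = E} from rfl,
      Set.ncard_eq_toFinset_card']
    simp [Set.toFinset_setOf]
  have hcond : ∀ σ : Equiv.Perm (Fin n),
      fixSet σ ∩ I = E ↔ E ⊆ fixSet σ ∧ fixSet σ ∩ T = ∅ := by
    intro σ
    constructor
    · intro h
      refine ⟨fun x hx => ?_, ?_⟩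
      · have hx' : x ∈ fixSet σ ∩ I := by rw [h]; exact hx
        exact (Finset.mem_inter.1 hx').1
      · rw [hTdef]
        ext x
        simp only [Finset.mem_inter, Finset.mem_sdiff, Finset.notMem_empty, iff_false]
        rintro ⟨hx, hxI, hxE⟩
        exact hxE (by rw [← h]; exact Finset.mem_inter.2 ⟨hx, hxI⟩)
    · rintro ⟨h1, h2⟩
      apply Finset.Subset.antisymm
      · intro x hx
        rcases Finset.mem_inter.1 hx with ⟨hxf, hxI⟩
        by_contra hxE
        have : x ∈ fixSet σ ∩ T := Finset.mem_inter.2 ⟨hxf, by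
          rw [hTdef]; exact Finset.mem_sdiff.2 ⟨hxI, hxE⟩⟩
        rw [h2] at this; exact absurd this (Finset.notMem_empty x)
      · intro x hx; exact Finset.mem_inter.2 ⟨h1 hx, hEI hx⟩
  rw [h1]
  have h2 : ((Finset.univ.filter fun σ : Equiv.Perm (Fin n) => fixSet σ ∩ I = E).card : ℤ)
      = ∑ σ : Equiv.Perm (Fin n),
          (if E ⊆ fixSet σ then
            ∑ S ∈ (fixSet σ ∩ T).powerset, (-1:ℤ)^S.card else 0) := by
    rw [Finset.card_filter]
    push_cast
    refine Finset.sum_congr rfl fun σ _ => ?_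
    simp only [hcond σ]
    by_cases hE : E ⊆ fixSet σ
    · rw [if_pos hE, Finset.sum_powerset_neg_one_pow_card]
      by_cases hT2 : fixSet σ ∩ T = ∅ <;> simp [hE, hT2]
    · simp [hE]
  rw [h2]
  have h3 : ∀ σ : Equiv.Perm (Fin n),
      (if E ⊆ fixSet σ then ∑ S ∈ (fixSet σ ∩ T).powerset, (-1:ℤ)^S.card else 0)
      = ∑ S ∈ T.powerset, (if E ∪ S ⊆ fixSet σ then (-1:ℤ)^S.card else 0) := by
    intro σ
    by_cases hE : E ⊆ fixSet σ
    · rw [if_pos hE]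
      have hpow : (fixSet σ ∩ T).powerset
          = T.powerset.filter (fun S => S ⊆ fixSet σ) := by
        ext S
        simp only [Finset.mem_powerset, Finset.mem_filter, Finset.subset_inter_iff]
        tauto
      rw [hpow, Finset.sum_filter]
      refine Finset.sum_congr rfl fun S _ => ?_
      have : E ∪ S ⊆ fixSet σ ↔ S ⊆ fixSet σ := by
        simp only [Finset.union_subset_iff]; tauto
      simp only [this]
    · rw [if_neg hE]
      refine (Finset.sum_eq_zero fun S _ => ?_).symm
      rw [if_neg]
      intro h
      exact hE ((Finset.subset_union_left).trans h)
  simp_rw [h3]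
  rw [Finset.sum_comm]
  have h4 : ∀ S ∈ T.powerset,
      (∑ σ : Equiv.Perm (Fin n), if E ∪ S ⊆ fixSet σ then (-1:ℤ)^S.card else 0)
      = (-1:ℤ)^S.card * (Nat.factorial (n - E.card - S.card) : ℤ) := by
    intro S hS
    have hsub : S ⊆ T := Finset.mem_powerset.1 hS
    have hcount : (Finset.univ.filter fun σ : Equiv.Perm (Fin n) => E ∪ S ⊆ fixSet σ).card
        = Nat.factorial (n - E.card - S.card) := by
      have heq : (Finset.univ.filter fun σ : Equiv.Perm (Fin n) => E ∪ S ⊆ fixSet σ)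
          = Finset.univ.filter fun σ : Equiv.Perm (Fin n) => ∀ x ∈ E ∪ S, σ x = x := by
        apply Finset.filter_congr
        intro σ _
        simp only [Finset.subset_iff, mem_fixSet]
      rw [heq, card_upset']
      have hcard : (E ∪ S).card = E.card + S.card :=
        Finset.card_union_of_disjoint (hdisj.mono_right hsub)
      rw [hcard]
      congr 1
      omega
    rw [← Finset.sum_filter, Finset.sum_const, hcount, nsmul_eq_mul]
    ring
  rw [Finset.sum_congr rfl h4]
  have h5 := Finset.sum_powerset_apply_card
    (f := fun j => (-1:ℤ)^j * (Nat.factorial (n - E.card - j) : ℤ)) (x := T)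
  rw [h5, hT]
  refine Finset.sum_congr rfl fun j _ => ?_
  rw [nsmul_eq_mul]
  ring

lemma self_mem_LSet {n : ℕ} (B : Finset (Fin n)) : B ∈ LSet B :=
  ⟨rfl, fun _ => le_rfl⟩

lemma exists_minimal_LFam {n : ℕ} (g : Set (Finset (Fin n))) (A : Finset (Fin n))
    (hA : A ∈ LFam g) : ∃ A' ∈ Lstar g, A' ⊆ A := by
  classical
  by_cases hmin : ∀ A' ∈ LFam g, A' ⊆ A → A' = A
  · exact ⟨A, ⟨hA, hmin⟩, subset_rfl⟩
  · push_neg at hmin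
    obtain ⟨A', hA', hsub, hne⟩ := hmin
    have hlt : A'.card < A.card := Finset.card_lt_card (ssubset_of_subset_of_ne hsub hne)
    obtain ⟨A'', h1, h2⟩ := exists_minimal_LFam g A' hA'
    exact ⟨A'', h1, h2.trans hsub⟩
termination_by A.card

lemma orderEmb_dom {n : ℕ} (A B : Finset (Fin n)) (h : A.card = B.card)
    (hc : ∀ c : Fin n, (B.filter (· ≤ c)).card ≤ (A.filter (· ≤ c)).card) :
    ∀ i : Fin B.card, A.orderEmbOfFin h i ≤ B.orderEmbOfFin rfl i := by
  intro i
  by_contra hlt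
  push_neg at hlt
  set c := B.orderEmbOfFin rfl i with hc'
  have hB : (i : ℕ) + 1 ≤ (B.filter (· ≤ c)).card := by
    have himg : (Finset.Iic i).image (B.orderEmbOfFin rfl) ⊆ B.filter (· ≤ c) := by
      intro y hy
      rcases Finset.mem_image.1 hy with ⟨j, hj, rfl⟩
      exact Finset.mem_filter.2 ⟨Finset.orderEmbOfFin_mem _ _ _,
        (B.orderEmbOfFin rfl).monotone (Finset.mem_Iic.1 hj)⟩
    calc (i : ℕ) + 1 = (Finset.Iic i).card := (Fin.card_Iic i).symm
      _ = ((Finset.Iic i).image (B.orderEmbOfFin rfl)).card :=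
          (Finset.card_image_of_injective _ (B.orderEmbOfFin rfl).injective).symm
      _ ≤ _ := Finset.card_le_card himg
  have hA : (A.filter (· ≤ c)).card ≤ (i : ℕ) := by
    have hsub : A.filter (· ≤ c) ⊆ (Finset.Iio i).image (A.orderEmbOfFin h) := by
      intro y hy
      rcases Finset.mem_filter.1 hy with ⟨hyA, hyc⟩
      obtain ⟨j, hj⟩ : ∃ j, A.orderEmbOfFin h j = y := by
        have : y ∈ Set.range (A.orderEmbOfFin h) := by
          rw [Finset.range_orderEmbOfFin]; exact hyA
        exact this
      refine Finset.mem_image.2 ⟨j, Finset.mem_Iio.2 ?_, hj⟩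
      have : A.orderEmbOfFin h j < A.orderEmbOfFin h i :=
        lt_of_le_of_lt (hj ▸ hyc) hlt
      exact (OrderEmbedding.lt_iff_lt _).1 this
    calc (A.filter (· ≤ c)).card ≤ ((Finset.Iio i).image (A.orderEmbOfFin h)).card :=
          Finset.card_le_card hsub
      _ = (Finset.Iio i).card :=
          Finset.card_image_of_injective _ (A.orderEmbOfFin h).injective
      _ = (i : ℕ) := Fin.card_Iio i
  have := (hB.trans (hc c)).trans hA
  omega

lemma shift_mem_LSet {n : ℕ} (E : Finset (Fin n)) (m x : Fin n) (hm : m ∈ E) (hx : x ∉ E)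
    (hxm : x < m) :
    insert x (E.erase m) ∈ LSet E := by
  classical
  set A := insert x (E.erase m) with hA
  have hxA : x ∉ E.erase m := fun h => hx (Finset.mem_of_mem_erase h)
  have hcard : A.card = E.card := by
    rw [hA, Finset.card_insert_of_notMem hxA, Finset.card_erase_of_mem hm]
    have : 0 < E.card := Finset.card_pos.2 ⟨m, hm⟩
    omega
  refine ⟨hcard, orderEmb_dom A E hcard ?_⟩
  intro c
  apply Finset.card_le_card_of_injOn (fun y => if y = m then x else y)
  · intro y hy
    rcases Finset.mem_filter.1 hy with ⟨hyE, hyc⟩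
    by_cases hym : y = m
    · simp only [if_pos hym]
      exact Finset.mem_filter.2 ⟨Finset.mem_insert_self _ _,
        le_trans hxm.le (hym ▸ hyc)⟩
    · simp only [if_neg hym]
      exact Finset.mem_filter.2 ⟨Finset.mem_insert_of_mem
        (Finset.mem_erase.2 ⟨hym, hyE⟩), hyc⟩
  · intro a ha b hb hab
    simp only [Finset.coe_filter, Set.mem_setOf_eq] at ha hb
    by_cases ham : a = m <;> by_cases hbm : b = m
    · rw [ham, hbm]
    · simp only [if_pos ham, if_neg hbm] at hab
      exact absurd (hab ▸ hb.1) hx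
    · simp only [if_neg ham, if_pos hbm] at hab
      exact absurd (hab ▸ ha.1) hx
    · simpa [if_neg ham, if_neg hbm] using hab

lemma sPlus_eq_max' {n : ℕ} (E : Finset (Fin n)) (hne : E.Nonempty) :
    sPlus E = (E.max' hne : ℕ) + 1 := by
  apply le_antisymm
  · apply Finset.sup_le
    intro x hx
    have := Finset.le_max' E x hx
    rw [Fin.le_def] at this
    omega
  · exact Finset.le_sup (f := fun x : Fin n => (x : ℕ) + 1) (E.max'_mem hne)

end Helpers

/-- For a maximal, fixed and compressed `t`-cycle-intersecting family `F`, a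
generating set `g ∈ G_*(F)` and `Ê ∈ g` with `s⁺(Ê) = s⁺(g)`: `D(Ê)` is exactly the
set of permutations generated by `Ê` alone, and its cardinality satisfies the
inclusion-exclusion formula. -/
theorem stmt15 {n t : ℕ} (F : Set (Equiv.Perm (Fin n)))
    (hF : TCycleIntersecting t F)
    (hmax : ∀ σ ∉ F, ¬ TCycleIntersecting t (insert σ F))
    (hfix : IsFixedFam F) (hcomp : IsCompressedFam F)
    (g : Set (Finset (Fin n))) (hg : IsGenSet g F) (hstar : Lstar g = g)
    (Ehat : Finset (Fin n)) (hE : Ehat ∈ g) (hs : sPlus Ehat = sPlusFam g) :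
    DSet Ehat = UpSet Ehat \ UpFam (g \ {Ehat}) ∧
      ((DSet Ehat).ncard : ℤ) =
        ∑ j ∈ Finset.range (sPlus Ehat - Ehat.card + 1),
          (-1 : ℤ) ^ j * ((sPlus Ehat - Ehat.card).choose j : ℤ) *
            (Nat.factorial (n - Ehat.card - j) : ℤ) := by
  classical
  constructor
  · ext σ
    simp only [Set.mem_diff]
    constructor
    · intro hσ
      have hfixE : fixSet σ ∩ Ival n (sPlus Ehat) = Ehat := hσ
      refine ⟨fun x hx => ?_, fun hcon => ?_⟩
      · have hx' : x ∈ fixSet σ ∩ Ival n (sPlus Ehat) := by rw [hfixE]; exact hx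
        exact (mem_fixSet σ x).1 (Finset.mem_inter.1 hx').1
      · rw [UpFam, Set.mem_iUnion₂] at hcon
        obtain ⟨B, hB, hσB⟩ := hcon
        obtain ⟨hBg, hBne⟩ := hB
        have hBfix : B ⊆ fixSet σ := fun y hy => (mem_fixSet σ y).2 (hσB y hy)
        have hBI : B ⊆ Ival n (sPlus Ehat) := by
          intro y hy
          have h1 : (y : ℕ) + 1 ≤ sPlus B :=
            Finset.le_sup (f := fun x : Fin n => (x : ℕ) + 1) hy
          have h2 : sPlus B ≤ sPlusFam g := by
            apply le_csSup
            · refine ⟨n, ?_⟩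
              rintro _ ⟨C, hC, rfl⟩
              exact sPlus_le' C
            · exact ⟨B, hBg, rfl⟩
          simp only [Ival, Finset.mem_filter, Finset.mem_univ, true_and]
          omega
        have hBE : B ⊆ Ehat := by
          rw [← hfixE]; exact Finset.subset_inter hBfix hBI
        have hEstar : Ehat ∈ Lstar g := by rw [hstar]; exact hE
        have hBL : B ∈ LFam g := Set.mem_iUnion₂.2 ⟨B, hBg, self_mem_LSet B⟩
        exact hBne (hEstar.2 B hBL hBE)
    · rintro ⟨hup, hnot⟩
      show fixSet σ ∩ Ival n (sPlus Ehat) = Ehat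
      apply Finset.Subset.antisymm
      · intro x hx
        rcases Finset.mem_inter.1 hx with ⟨hxf, hxI⟩
        by_contra hxE
        have hne : Ehat.Nonempty := by
          rcases Finset.eq_empty_or_nonempty Ehat with h | h
          · exfalso
            rw [h] at hxI
            simp [sPlus, Ival] at hxI
          · exact h
        set m := Ehat.max' hne with hm
        have hsm : sPlus Ehat = (m : ℕ) + 1 := sPlus_eq_max' Ehat hne
        have hxI' : (x : ℕ) < sPlus Ehat := by
          simpa [Ival] using hxI
        have hxm : x < m := by
          rw [Fin.lt_def]
          have hxnem : (x : ℕ) ≠ (m : ℕ) := fun h => hxE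
            ((Fin.val_injective h) ▸ Ehat.max'_mem hne)
          omega
        have hAL : insert x (Ehat.erase m) ∈ LSet Ehat :=
          shift_mem_LSet Ehat m x (Ehat.max'_mem hne) hxE hxm
        have hALF : insert x (Ehat.erase m) ∈ LFam g :=
          Set.mem_iUnion₂.2 ⟨Ehat, hE, hAL⟩
        obtain ⟨A', hA', hA'sub⟩ := exists_minimal_LFam g _ hALF
        have hA'g : A' ∈ g := by rw [← hstar]; exact hA'
        have hA'ne : A' ≠ Ehat := by
          intro h
          have hmem : m ∈ insert x (Ehat.erase m) := hA'sub (h ▸ Ehat.max'_mem hne)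
          rcases Finset.mem_insert.1 hmem with h' | h'
          · exact absurd h'.symm (ne_of_lt hxm)
          · exact (Finset.notMem_erase m Ehat) h'
        apply hnot
        rw [UpFam, Set.mem_iUnion₂]
        refine ⟨A', ⟨hA'g, hA'ne⟩, ?_⟩
        intro y hy
        rcases Finset.mem_insert.1 (hA'sub hy) with h' | h'
        · rw [h']
          exact (mem_fixSet σ x).1 hxf
        · exact hup y (Finset.mem_of_mem_erase h')
      · intro x hx
        refine Finset.mem_inter.2 ⟨(mem_fixSet σ x).2 (hup x hx), ?_⟩
        simp only [Ival, Finset.mem_filter, Finset.mem_univ, true_and]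
        have : (x : ℕ) + 1 ≤ sPlus Ehat :=
          Finset.le_sup (f := fun x : Fin n => (x : ℕ) + 1) hx
        omega
  · exact card_DSet Ehat
end
end
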